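/- arXiv:2109.03025 — 5 statements merged into one kernel-verified Lean document; each statement's English description precedes it below -/
import Mathlib

section
/- Let k, d ≥ 1, let 𝓗 be a finite set of k-hypergraphs of dimension d, and let H = (V, μ) be a k-hypergraph of dimension d. Then H ∈ Σ_ℤ(Eqs(𝓗)) if and only if H is locally a ℤ-sum of 𝓗, i.e. for every subset X ⊆ V with |X| ≤ k, the weight w_X(H) lies in the ℤ-span of { w_{X′}(H′) : H′ = (V′, μ′) ∈ 𝓗, X′ ⊆ V′, |X′| = |X| }. -/
/-- A hypergraph (of dimension `d`) over the data domain `ℕ`, represented by its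
weight function: a finitely supported function from finite sets of data values
(potential hyperedges) to weight vectors in `ℤ^d`.  Isolated vertices are
irrelevant (hypergraphs are identified up to isolated vertices). -/
abbrev HG (d : ℕ) := (Finset ℕ) →₀ (Fin d → ℤ)

/-- `H` is a `k`-hypergraph: every hyperedge (set with nonzero weight) has `k` elements. -/
def IsHG (k : ℕ) {d : ℕ} (H : HG d) : Prop := ∀ e ∈ H.support, e.card = k

/-- The (non-isolated) vertices of `H`: the union of its hyperedges. -/
def verts {d : ℕ} (H : HG d) : Finset ℕ := H.support.sup id

/-- The weight `w_X(H)` of a finite set `X`: the sum of the weights of all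
hyperedges of `H` that contain `X`. -/
def weight {d : ℕ} (X : Finset ℕ) (H : HG d) : Fin d → ℤ :=
  ∑ e ∈ H.support.filter (fun e => X ⊆ e), H e
/-- Two hypergraphs are equivalent if (after discarding isolated vertices) they
differ by a permutation of the data domain. -/
def HGEquiv {d : ℕ} (H₁ H₂ : HG d) : Prop :=
  ∃ π : ℕ ≃ ℕ, ∀ e : Finset ℕ, H₂ (e.image π) = H₁ e

/-- All hypergraphs equivalent to a member of the family `𝒢`. -/
def Eqs {d : ℕ} (𝒢 : Set (HG d)) : Set (HG d) := {H | ∃ G ∈ 𝒢, HGEquiv G H}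

/-- `Σ_ℤ(𝒢)`: all finite `ℤ`-linear combinations of members of `𝒢`. -/
def Zsum {d : ℕ} (𝒢 : Set (HG d)) : Set (HG d) :=
  {H | ∃ (l : ℕ) (c : Fin l → ℤ) (F : Fin l → HG d),
      (∀ i, F i ∈ 𝒢) ∧ H = ∑ i, c i • F i}

/-!
Both sides are `ℤ`-linear and invariant under renaming, which gives the forward direction.
Conversely, induct on the arity `k`. After subtracting a `ℤ`-combination of members of `𝓗`
the total weight `w_∅(H)` vanishes. With `O` the vertex set of `H`, the hyperedges are then
cancelled layer by layer, by their number of vertices in `O`, from the top down. The hyperedges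
meeting `O` in a set `Y = {y₁, …, yₘ}` form the cone over the link of `H` at `Y`, a `ℤ`-sum of
iterated links of `𝓗` by induction on `k`; subtracting `∏ᵢ (cone yᵢ - cone cᵢ)` of that link,
with fresh partners `cᵢ`, removes them at the price of hyperedges with fewer vertices in `O`.
The dipole lemma makes this a `ℤ`-sum of renamed members of `𝓗`: renaming a vertex `y` of `G` to
a fresh `u` yields `cone u (link y G)` plus the hyperedges of `G` avoiding `y`, so the difference
of two such renamings is `cone u (link y G) - cone v (link y G)`.

Deleting `O` from every hyperedge (`strip O`) kills `H` once `w_∅(H) = 0`. As the partners `cᵢ`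
are the same for every `Y`, stripping turns the subtracted gadgets into one fixed operator
applied to the stripped top layer, which vanishes; so `strip O` kills every stage. At the end no
hyperedge meets `O`, so the remainder equals its own strip and is zero.
-/

namespace Finsupp

variable {α β M : Type*} [AddCommMonoid M]

lemma mapDomain_eq_self {f : α → α} {v : α →₀ M} (h : ∀ a ∈ v.support, f a = a) :
    mapDomain f v = v :=
  (mapDomain_congr h).trans mapDomain_id

lemma mapDomain_mem_supported (R : Type*) [Semiring R] [Module R M] {f : α → β} {v : α →₀ M}
    {s : Set β} (h : ∀ a ∈ v.support, f a ∈ s) : mapDomain f v ∈ supported M R s := by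
  classical
  intro b hb
  obtain ⟨a, ha, rfl⟩ := Finset.mem_image.mp (mapDomain_support hb)
  exact h a ha

end Finsupp

lemma Finset.image_swap_of_mem {α : Type*} [DecidableEq α] {s : Finset α} {a b : α} (ha : a ∈ s)
    (hb : b ∉ s) : s.image (Equiv.swap a b) = insert b (s \ {a}) := by
  ext x
  simp only [Finset.mem_image, Finset.mem_insert, Finset.mem_sdiff, Finset.mem_singleton]
  constructor
  · rintro ⟨z, hz, rfl⟩
    rcases eq_or_ne z a with rfl | hza
    · simp
    · have hzb : z ≠ b := fun h => hb (h ▸ hz)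
      simp [Equiv.swap_apply_of_ne_of_ne hza hzb, hz, hza]
  · rintro (rfl | ⟨hx, hxa⟩)
    · exact ⟨a, ha, Equiv.swap_apply_left a x⟩
    · exact ⟨x, hx, Equiv.swap_apply_of_ne_of_ne hxa fun h => hb (h ▸ hx)⟩

lemma exists_perm_fix_avoid {α : Type*} [DecidableEq α] [Infinite α] (A S B : Finset α)
    (hAB : Disjoint A B) : ∃ σ : Equiv.Perm α, (∀ x ∈ A, σ x = x) ∧ Disjoint (S.image σ) B := by
  induction B using Finset.induction_on with
  | empty => exact ⟨Equiv.refl α, fun _ _ => rfl, Finset.disjoint_empty_right _⟩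
  | insert b B _ ih =>
    obtain ⟨hbA, hAB⟩ := Finset.disjoint_insert_right.mp hAB
    obtain ⟨σ, hfix, hS⟩ := ih hAB
    obtain ⟨z, hz⟩ := Infinite.exists_notMem_finset (A ∪ insert b B ∪ S.image σ)
    simp only [Finset.mem_union, not_or] at hz
    obtain ⟨⟨hzA, hzB⟩, hzS⟩ := hz
    refine ⟨σ.trans (Equiv.swap b z), fun x hx => ?_, Finset.disjoint_left.mpr ?_⟩
    · rw [Equiv.trans_apply, hfix x hx,
        Equiv.swap_apply_of_ne_of_ne (fun h : x = b => hbA (h ▸ hx)) fun h : x = z => hzA (h ▸ hx)]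
    · rintro _ hx
      obtain ⟨s, hs, rfl⟩ := Finset.mem_image.mp hx
      have hσs : σ s ∈ S.image σ := Finset.mem_image_of_mem σ hs
      rw [Equiv.trans_apply]
      rcases eq_or_ne (σ s) b with h | h
      · rwa [h, Equiv.swap_apply_left]
      · rw [Equiv.swap_apply_of_ne_of_ne h fun h' : σ s = z => hzS (h' ▸ hσs), Finset.mem_insert,
          not_or]
        exact ⟨h, Finset.disjoint_left.mp hS hσs⟩

namespace HG

open Finsupp hiding weight

variable {d : ℕ}

lemma mem_verts {H : HG d} {x : ℕ} : x ∈ verts H ↔ ∃ e ∈ H.support, x ∈ e := by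
  simp [verts, Finset.mem_sup]

lemma subset_verts {H : HG d} {e : Finset ℕ} (he : e ∈ H.support) : e ⊆ verts H :=
  Finset.le_sup (f := id) he

lemma exists_mem_of_mem_verts_mapDomain {g : Finset ℕ → Finset ℕ} {H : HG d} {x : ℕ}
    (hx : x ∈ verts (mapDomain g H)) : ∃ e ∈ H.support, x ∈ g e := by
  obtain ⟨e, he, hxe⟩ := mem_verts.mp hx
  obtain ⟨e', he', rfl⟩ := Finset.mem_image.mp (mapDomain_support he)
  exact ⟨e', he', hxe⟩

lemma verts_sub_subset (M₁ M₂ : HG d) : verts (M₁ - M₂) ⊆ verts M₁ ∪ verts M₂ := by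
  intro x hx
  obtain ⟨e, he, hxe⟩ := mem_verts.mp hx
  rcases Finset.mem_union.mp (support_sub he) with he | he
  · exact Finset.mem_union_left _ (subset_verts he hxe)
  · exact Finset.mem_union_right _ (subset_verts he hxe)

lemma isHG_iff_mem_supported {k : ℕ} {H : HG d} :
    IsHG k H ↔ H ∈ supported _ ℤ {e : Finset ℕ | e.card = k} := by
  rw [mem_supported]
  rfl

lemma isHG_sub {t : ℕ} {M₁ M₂ : HG d} (h₁ : IsHG t M₁) (h₂ : IsHG t M₂) : IsHG t (M₁ - M₂) :=
  isHG_iff_mem_supported.mpr <|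
    Submodule.sub_mem _ (isHG_iff_mem_supported.mp h₁) (isHG_iff_mem_supported.mp h₂)

lemma weight_eq_sum (X : Finset ℕ) (H : HG d) :
    weight X H = H.sum fun e a => if X ⊆ e then a else 0 := by
  unfold weight
  rw [Finset.sum_filter]
  rfl

noncomputable def weightₗ (X : Finset ℕ) : HG d →ₗ[ℤ] (Fin d → ℤ) :=
  Finsupp.lsum ℤ fun e => if X ⊆ e then LinearMap.id else 0

@[simp] lemma weightₗ_apply (X : Finset ℕ) (H : HG d) : weightₗ X H = weight X H := by
  rw [weight_eq_sum, weightₗ, lsum_apply]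
  congr! 2 with e a
  split_ifs <;> rfl

lemma weight_mapDomain (X : Finset ℕ) (g : Finset ℕ → Finset ℕ) (H : HG d) :
    weight X (mapDomain g H) = ∑ e ∈ H.support with X ⊆ g e, H e := by
  rw [weight_eq_sum, sum_mapDomain_index (fun _ => by simp) (fun _ _ _ => by split_ifs <;> simp),
    Finsupp.sum, Finset.sum_filter]

lemma weight_eq_zero_of_forall_not_subset {X : Finset ℕ} {H : HG d}
    (h : ∀ e ∈ H.support, ¬ X ⊆ e) : weight X H = 0 := by
  unfold weight
  rw [Finset.filter_false_of_mem h, Finset.sum_empty]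

/-! ### Renaming -/

noncomputable def ren (π : ℕ ≃ ℕ) : HG d →ₗ[ℤ] HG d := lmapDomain _ ℤ (Finset.image π)

lemma ren_apply (π : ℕ ≃ ℕ) (H : HG d) : ren π H = mapDomain (Finset.image π) H := rfl

lemma ren_apply_image (π : ℕ ≃ ℕ) (H : HG d) (e : Finset ℕ) : ren π H (e.image π) = H e :=
  mapDomain_apply (Finset.image_injective π.injective) H e

lemma hgEquiv_iff {G H : HG d} : HGEquiv G H ↔ ∃ π, H = ren π G := by
  refine ⟨fun ⟨π, hπ⟩ => ⟨π, ?_⟩, fun ⟨π, hπ⟩ => ⟨π, fun e => by rw [hπ, ren_apply_image]⟩⟩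
  ext e : 1
  obtain ⟨e, rfl⟩ : ∃ e', e = e'.image π := ⟨e.image π.symm, by simp [Finset.image_image]⟩
  rw [hπ, ren_apply_image]

lemma mem_Eqs_iff {𝒢 : Set (HG d)} {H : HG d} : H ∈ Eqs 𝒢 ↔ ∃ G ∈ 𝒢, ∃ π, H = ren π G := by
  simp only [Eqs, Set.mem_ofPred_eq, hgEquiv_iff]

lemma ren_ren (π σ : ℕ ≃ ℕ) (H : HG d) : ren σ (ren π H) = ren (π.trans σ) H := by
  simp only [ren_apply, ← mapDomain_comp]
  congr 1
  funext e
  simp [Finset.image_image]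

lemma ren_mem_Eqs {𝒢 : Set (HG d)} {H : HG d} (h : H ∈ Eqs 𝒢) (σ : ℕ ≃ ℕ) : ren σ H ∈ Eqs 𝒢 := by
  obtain ⟨G, hG, π, rfl⟩ := mem_Eqs_iff.mp h
  exact mem_Eqs_iff.mpr ⟨G, hG, π.trans σ, ren_ren π σ G⟩

lemma mem_Eqs_of_mem {𝒢 : Set (HG d)} {G : HG d} (hG : G ∈ 𝒢) : G ∈ Eqs 𝒢 :=
  mem_Eqs_iff.mpr ⟨G, hG, Equiv.refl ℕ, (mapDomain_eq_self fun _ _ => Finset.image_id).symm⟩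

lemma ren_eq_self {σ : ℕ ≃ ℕ} {H : HG d} (h : ∀ x ∈ verts H, σ x = x) : ren σ H = H :=
  mapDomain_eq_self fun _ he =>
    (Finset.image_congr fun x hx => h x (subset_verts he hx)).trans Finset.image_id

lemma verts_ren_subset (σ : ℕ ≃ ℕ) (H : HG d) : verts (ren σ H) ⊆ (verts H).image σ := by
  intro x hx
  obtain ⟨e, he, hx⟩ := exists_mem_of_mem_verts_mapDomain hx
  exact Finset.image_subset_image (subset_verts he) hx

lemma weight_ren (π : ℕ ≃ ℕ) (X : Finset ℕ) (H : HG d) :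
    weight X (ren π H) = weight (X.image π.symm) H := by
  rw [ren_apply, weight_mapDomain]
  unfold weight
  congr! 2
  constructor
  · intro h
    simpa [Finset.image_image] using Finset.image_subset_image (f := π.symm) h
  · intro h
    simpa [Finset.image_image] using Finset.image_subset_image (f := π) h

/-! ### Links, cones and stripping -/

lemma filter_ren (σ : ℕ ≃ ℕ) (p : Finset ℕ → Prop) [DecidablePred p] (H : HG d) :
    (ren σ H).filter p = ren σ (H.filter fun e => p (e.image σ)) := by
  ext e : 1
  obtain ⟨e, rfl⟩ : ∃ e', e = e'.image σ := ⟨e.image σ.symm, by simp [Finset.image_image]⟩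
  simp only [filter_apply, ren_apply_image]

noncomputable def link (Y : Finset ℕ) (H : HG d) : HG d :=
  mapDomain (· \ Y) (H.filter (Y ⊆ ·))

lemma exists_of_mem_support_link {Y f : Finset ℕ} {H : HG d} (hf : f ∈ (link Y H).support) :
    ∃ e ∈ H.support, Y ⊆ e ∧ f = e \ Y := by
  obtain ⟨e, he, rfl⟩ := Finset.mem_image.mp (mapDomain_support hf)
  rw [support_filter, Finset.mem_filter] at he
  exact ⟨e, he.1, he.2, rfl⟩

lemma isHG_link {k : ℕ} {H : HG d} (hH : IsHG k H) (Y : Finset ℕ) :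
    IsHG (k - Y.card) (link Y H) := by
  intro f hf
  obtain ⟨e, he, hYe, rfl⟩ := exists_of_mem_support_link hf
  rw [Finset.card_sdiff_of_subset hYe, hH e he]

lemma verts_link_subset (Y : Finset ℕ) (H : HG d) : verts (link Y H) ⊆ verts H \ Y := by
  intro x hx
  obtain ⟨f, hf, hxf⟩ := mem_verts.mp hx
  obtain ⟨e, he, -, rfl⟩ := exists_of_mem_support_link hf
  exact Finset.sdiff_subset_sdiff (subset_verts he) le_rfl hxf

lemma weight_link {Y Z : Finset ℕ} (h : Disjoint Z Y) (H : HG d) :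
    weight Z (link Y H) = weight (Z ∪ Y) H := by
  rw [link, weight_mapDomain, support_filter, Finset.filter_filter]
  unfold weight
  refine Finset.sum_congr (Finset.filter_congr fun e _ => ?_) fun e he => ?_
  · rw [Finset.subset_sdiff, Finset.union_subset_iff]
    tauto
  · exact filter_apply_pos _ _ (Finset.union_subset_right (Finset.mem_filter.mp he).2)

lemma weight_link_of_not_disjoint {Y Z : Finset ℕ} (h : ¬ Disjoint Z Y) (H : HG d) :
    weight Z (link Y H) = 0 := by
  refine weight_eq_zero_of_forall_not_subset fun f hf hZf => h ?_
  obtain ⟨e, -, -, rfl⟩ := exists_of_mem_support_link hf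
  exact Finset.disjoint_of_subset_left hZf Finset.sdiff_disjoint

lemma ren_link (σ : ℕ ≃ ℕ) (Y : Finset ℕ) (H : HG d) :
    ren σ (link Y H) = link (Y.image σ) (ren σ H) := by
  rw [link, link, filter_ren]
  simp only [Finset.image_subset_image_iff σ.injective, ren_apply, ← mapDomain_comp]
  congr 1
  funext e
  exact Finset.image_sdiff _ _ σ.injective

noncomputable def cone (a : ℕ) : HG d →ₗ[ℤ] HG d := lmapDomain _ ℤ (insert a)

lemma cone_apply (a : ℕ) (M : HG d) : cone a M = mapDomain (insert a) M := rfl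

lemma isHG_cone {t a : ℕ} {M : HG d} (hM : IsHG t M) (ha : a ∉ verts M) :
    IsHG (t + 1) (cone a M) :=
  isHG_iff_mem_supported.mpr <| mapDomain_mem_supported ℤ fun e he => by
    rw [Set.mem_ofPred_eq, Finset.card_insert_of_notMem fun h => ha (subset_verts he h), hM e he]

lemma mem_verts_cone {a x : ℕ} {M : HG d} (hx : x ∈ verts (cone a M)) :
    x = a ∨ x ∈ verts M := by
  obtain ⟨e, he, hxe⟩ := exists_mem_of_mem_verts_mapDomain hx
  exact (Finset.mem_insert.mp hxe).imp_right fun h => subset_verts he h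

lemma ren_swap {y u : ℕ} {G : HG d} (hu : u ∉ verts G) :
    ren (Equiv.swap y u) G = cone u (link {y} G) + G.filter (¬ {y} ⊆ ·) := by
  conv_lhs => rw [← filter_add_filter_not G ({y} ⊆ ·)]
  rw [map_add, ren_apply, ren_apply, cone_apply, link, ← mapDomain_comp]
  congr 1
  · refine mapDomain_congr fun e he => ?_
    rw [support_filter, Finset.mem_filter] at he
    exact Finset.image_swap_of_mem (Finset.singleton_subset_iff.mp he.2)
      fun h => hu (subset_verts he.1 h)
  · refine mapDomain_eq_self fun e he => ?_
    rw [support_filter, Finset.mem_filter, Finset.singleton_subset_iff] at he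
    refine (Finset.image_congr fun x hx => ?_).trans Finset.image_id
    exact Equiv.swap_apply_of_ne_of_ne (fun h => he.2 (h ▸ hx))
      fun h => hu (subset_verts he.1 (h ▸ hx))

noncomputable def strip (O : Finset ℕ) : HG d →ₗ[ℤ] HG d := lmapDomain _ ℤ (· \ O)

lemma strip_apply (O : Finset ℕ) (H : HG d) : strip O H = mapDomain (· \ O) H := rfl

lemma strip_mul_cone_of_mem {O : Finset ℕ} {a : ℕ} (ha : a ∈ O) :
    strip O * cone a = (strip O : Module.End ℤ (HG d)) := by
  rw [Module.End.mul_eq_comp, strip, cone, ← lmapDomain_comp]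
  congr 1
  funext e
  exact Finset.insert_sdiff_of_mem e ha

lemma strip_mul_cone_of_notMem {O : Finset ℕ} {a : ℕ} (ha : a ∉ O) :
    strip O * cone a = cone a * (strip O : Module.End ℤ (HG d)) := by
  rw [Module.End.mul_eq_comp, Module.End.mul_eq_comp, strip, cone, ← lmapDomain_comp,
    ← lmapDomain_comp]
  congr 1
  funext e
  exact Finset.insert_sdiff_of_notMem e ha

/-! ### Local `ℤ`-sums -/

def links (𝒢 : Set (HG d)) : Set (HG d) := {K | ∃ G ∈ 𝒢, ∃ y, K = link {y} G}

lemma isHG_of_mem_links_iterate {k : ℕ} {𝒢 : Set (HG d)} (h𝒢 : ∀ G ∈ 𝒢, IsHG k G) (r : ℕ) :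
    ∀ K ∈ links^[r] 𝒢, IsHG (k - r) K := by
  induction r generalizing 𝒢 k with
  | zero => simpa using h𝒢
  | succ r ih =>
    have h : ∀ K ∈ links 𝒢, IsHG (k - 1) K := by
      rintro K ⟨G, hG, y, rfl⟩
      simpa using isHG_link (h𝒢 G hG) {y}
    simpa [Function.iterate_succ_apply, Nat.sub_sub, Nat.add_comm 1 r] using ih h

lemma eqs_links_subset (𝒢 : Set (HG d)) : Eqs (links 𝒢) ⊆ links (Eqs 𝒢) := by
  intro K hK
  obtain ⟨_, ⟨G, hG, y, rfl⟩, π, rfl⟩ := mem_Eqs_iff.mp hK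
  exact ⟨ren π G, mem_Eqs_iff.mpr ⟨G, hG, π, rfl⟩, π y, by rw [ren_link, Finset.image_singleton]⟩

noncomputable def eqsSpan (𝒢 : Set (HG d)) : Submodule ℤ (HG d) := Submodule.span ℤ (Eqs 𝒢)

lemma mem_Zsum_iff {𝒮 : Set (HG d)} {H : HG d} : H ∈ Zsum 𝒮 ↔ H ∈ Submodule.span ℤ 𝒮 := by
  refine ⟨fun ⟨l, c, F, hF, hH⟩ => ?_, fun h => ?_⟩
  · exact hH ▸ Submodule.sum_mem _ fun i _ => Submodule.smul_mem _ _ (Submodule.subset_span (hF i))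
  · obtain ⟨n, c, g, hg⟩ := Submodule.mem_span_set'.mp h
    exact ⟨n, c, fun i => g i, fun i => (g i).2, hg.symm⟩

noncomputable def weightSpan (𝒢 : Set (HG d)) (n : ℕ) : Submodule ℤ (Fin d → ℤ) :=
  Submodule.span ℤ
    {w | ∃ G ∈ 𝒢, ∃ X' : Finset ℕ, X' ⊆ verts G ∧ X'.card = n ∧ w = weight X' G}

lemma weight_mem_weightSpan {𝒢 : Set (HG d)} {G : HG d} (hG : G ∈ 𝒢) (X : Finset ℕ) :
    weight X G ∈ weightSpan 𝒢 X.card := by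
  by_cases hX : X ⊆ verts G
  · exact Submodule.subset_span ⟨G, hG, X, hX, rfl, rfl⟩
  · rw [weight_eq_zero_of_forall_not_subset fun e he hXe => hX (hXe.trans (subset_verts he))]
    exact Submodule.zero_mem _

lemma weightSpan_succ_le (𝒢 : Set (HG d)) (n : ℕ) :
    weightSpan 𝒢 (n + 1) ≤ weightSpan (links 𝒢) n := by
  refine Submodule.span_le.mpr ?_
  rintro _ ⟨G, hG, X, -, hX, rfl⟩
  obtain ⟨y, hy⟩ := Finset.card_pos.mp (by omega : 0 < X.card)
  have hlink : weight X G = weight (X.erase y) (link {y} G) := by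
    rw [weight_link (Finset.disjoint_singleton_right.mpr (Finset.notMem_erase y X)),
      Finset.union_singleton, Finset.insert_erase hy]
  rw [hlink, ← show (X.erase y).card = n by rw [Finset.card_erase_of_mem hy, hX]; rfl]
  exact weight_mem_weightSpan (𝒢 := links 𝒢) ⟨G, hG, y, rfl⟩ _

lemma weightSpan_add_le (𝒢 : Set (HG d)) (n r : ℕ) :
    weightSpan 𝒢 (n + r) ≤ weightSpan (links^[r] 𝒢) n := by
  induction r generalizing 𝒢 with
  | zero => rfl
  | succ r ih =>
    rw [Function.iterate_succ_apply, ← Nat.add_assoc]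
    exact (weightSpan_succ_le 𝒢 (n + r)).trans (ih (links 𝒢))

lemma weightSpan_zero_le (𝒢 : Set (HG d)) :
    weightSpan 𝒢 0 ≤ (Submodule.span ℤ 𝒢).map (weightₗ ∅) := by
  refine Submodule.span_le.mpr ?_
  rintro _ ⟨G, hG, X, -, hX, rfl⟩
  exact ⟨G, Submodule.subset_span hG, by rw [weightₗ_apply, Finset.card_eq_zero.mp hX]⟩

noncomputable def locallyZSum (𝒢 : Set (HG d)) : Submodule ℤ (HG d) :=
  ⨅ X : Finset ℕ, (weightSpan 𝒢 X.card).comap (weightₗ X)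

lemma mem_locallyZSum {𝒢 : Set (HG d)} {H : HG d} :
    H ∈ locallyZSum 𝒢 ↔ ∀ X, weight X H ∈ weightSpan 𝒢 X.card := by
  simp [locallyZSum, Submodule.mem_iInf]

lemma eqsSpan_le_locallyZSum (𝒢 : Set (HG d)) : eqsSpan 𝒢 ≤ locallyZSum 𝒢 := by
  refine Submodule.span_le.mpr fun H hH => mem_locallyZSum.mpr fun X => ?_
  obtain ⟨G, hG, π, rfl⟩ := mem_Eqs_iff.mp hH
  rw [weight_ren, ← Finset.card_image_of_injective X π.symm.injective]
  exact weight_mem_weightSpan hG _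

lemma link_mem_locallyZSum {𝒢 : Set (HG d)} {H : HG d} (hH : H ∈ locallyZSum 𝒢)
    (Y : Finset ℕ) : link Y H ∈ locallyZSum (links^[Y.card] 𝒢) := by
  refine mem_locallyZSum.mpr fun Z => ?_
  by_cases hZY : Disjoint Z Y
  · rw [weight_link hZY]
    refine weightSpan_add_le 𝒢 Z.card Y.card ?_
    rw [← Finset.card_union_of_disjoint hZY]
    exact mem_locallyZSum.mp hH _
  · rw [weight_link_of_not_disjoint hZY]
    exact Submodule.zero_mem _

/-! ### The dipole lemma -/

lemma cone_sub_cone_link_mem_eqsSpan {𝒢 : Set (HG d)} {G : HG d} (hG : G ∈ Eqs 𝒢) (y : ℕ)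
    {u v : ℕ} (hu : u ∉ verts G) (hv : v ∉ verts G) :
    cone u (link {y} G) - cone v (link {y} G) ∈ eqsSpan 𝒢 := by
  have h := (eqsSpan 𝒢).sub_mem (Submodule.subset_span (ren_mem_Eqs hG (Equiv.swap y u)))
    (Submodule.subset_span (ren_mem_Eqs hG (Equiv.swap y v)))
  rwa [ren_swap hu, ren_swap hv, add_sub_add_right_eq_sub] at h

/-- The summands of `K` are first renamed, fixing `K`, so that `u` and `v` avoid the hypergraphs
whose links they are; then `ren_swap` applies. -/
lemma cone_sub_cone_mem_eqsSpan {𝒢 : Set (HG d)} {K : HG d} (hK : K ∈ eqsSpan (links 𝒢))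
    {u v : ℕ} (hu : u ∉ verts K) (hv : v ∉ verts K) :
    cone u K - cone v K ∈ eqsSpan 𝒢 := by
  obtain ⟨n, c, g, hg⟩ := Submodule.mem_span_set'.mp (Submodule.span_mono (eqs_links_subset 𝒢) hK)
  choose G hG y hy using fun i => (g i).2
  obtain ⟨σ, hfix, hσ⟩ := exists_perm_fix_avoid (verts K) (Finset.univ.sup fun i => verts (G i))
    {u, v} (by simp [hu, hv])
  have hfresh : ∀ i, ∀ w ∈ ({u, v} : Finset ℕ), w ∉ verts (ren σ (G i)) := fun i w hw hw' =>
    Finset.disjoint_right.mp hσ hw <| Finset.image_subset_image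
      (Finset.le_sup (f := fun i => verts (G i)) (Finset.mem_univ i)) (verts_ren_subset σ _ hw')
  have hK : K = ∑ i, c i • link {σ (y i)} (ren σ (G i)) := by
    conv_lhs => rw [← ren_eq_self hfix, ← hg]
    simp only [map_sum, map_zsmul, hy, ren_link, Finset.image_singleton]
  rw [← LinearMap.sub_apply, hK, map_sum]
  refine Submodule.sum_mem _ fun i _ => ?_
  rw [map_zsmul]
  exact Submodule.smul_mem _ _ (cone_sub_cone_link_mem_eqsSpan (ren_mem_Eqs (hG i) σ) _
    (hfresh i u (by simp)) (hfresh i v (by simp)))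

/-! ### Gadgets -/

/-- The partner of `yᵢ` in `[y₁, …, yₘ]` is `N + m - i`, which is fresh as soon as `N` exceeds
every vertex in sight. -/
noncomputable def gadget (N : ℕ) : List ℕ → Module.End ℤ (HG d)
  | [] => 1
  | y :: ys => (cone y - cone (N + ys.length)) * gadget N ys

noncomputable def strippedGadget (N : ℕ) : ℕ → Module.End ℤ (HG d)
  | 0 => 1
  | n + 1 => (1 - cone (N + n)) * strippedGadget N n

lemma gadget_cons_apply (N y : ℕ) (ys : List ℕ) (K : HG d) :
    gadget N (y :: ys) K = cone y (gadget N ys K) - cone (N + ys.length) (gadget N ys K) :=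
  rfl

lemma mem_verts_gadget {N x : ℕ} {ys : List ℕ} {K : HG d} (hx : x ∈ verts (gadget N ys K)) :
    x ∈ verts K ∨ x ∈ ys ∨ N ≤ x ∧ x < N + ys.length := by
  induction ys with
  | nil => exact Or.inl hx
  | cons y ys ih =>
    rw [gadget_cons_apply] at hx
    rcases Finset.mem_union.mp (verts_sub_subset _ _ hx) with hx | hx <;>
      rcases mem_verts_cone hx with rfl | hx
    · simp
    · rcases ih hx with h | h | h <;> simp [h]
      omega
    · simp
    · rcases ih hx with h | h | h <;> simp [h]
      omega

def GadgetFresh (N : ℕ) (ys : List ℕ) (K : HG d) : Prop :=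
  ys.Nodup ∧ (∀ y ∈ ys, y < N ∧ y ∉ verts K) ∧ ∀ x ∈ verts K, x < N

lemma GadgetFresh.of_cons {N y : ℕ} {ys : List ℕ} {K : HG d} (h : GadgetFresh N (y :: ys) K) :
    GadgetFresh N ys K ∧ y ∉ verts (gadget N ys K) ∧ N + ys.length ∉ verts (gadget N ys K) := by
  obtain ⟨hnd, hys, hK⟩ := h
  rw [List.nodup_cons] at hnd
  have hy := hys y List.mem_cons_self
  refine ⟨⟨hnd.2, fun z hz => hys z (List.mem_cons_of_mem y hz), hK⟩, fun hy' => ?_, fun hc => ?_⟩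
  · rcases mem_verts_gadget hy' with h | h | h
    exacts [hy.2 h, hnd.1 h, by omega]
  · rcases mem_verts_gadget hc with h | h | h
    · exact absurd (hK _ h) (by omega)
    · exact absurd (hys _ (List.mem_cons_of_mem y h)).1 (by omega)
    · omega

lemma gadget_mem_eqsSpan {N : ℕ} {K : HG d} {ys : List ℕ} {𝒢 : Set (HG d)}
    (hfresh : GadgetFresh N ys K) (hK : K ∈ eqsSpan (links^[ys.length] 𝒢)) :
    gadget N ys K ∈ eqsSpan 𝒢 := by
  induction ys generalizing 𝒢 with
  | nil => exact hK
  | cons y ys ih =>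
    obtain ⟨hfresh, hy, hc⟩ := hfresh.of_cons
    exact cone_sub_cone_mem_eqsSpan (ih hfresh hK) hy hc

lemma isHG_gadget {N t : ℕ} {K : HG d} {ys : List ℕ} (hfresh : GadgetFresh N ys K)
    (hK : IsHG t K) : IsHG (t + ys.length) (gadget N ys K) := by
  induction ys with
  | nil => exact hK
  | cons y ys ih =>
    obtain ⟨hfresh, hy, hc⟩ := hfresh.of_cons
    rw [List.length_cons, ← Nat.add_assoc, gadget_cons_apply]
    exact isHG_sub (isHG_cone (ih hfresh) hy) (isHG_cone (ih hfresh) hc)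

lemma strip_mul_gadget {O : Finset ℕ} {N : ℕ} (hN : ∀ x ∈ O, x < N) {ys : List ℕ}
    (hys : ∀ y ∈ ys, y ∈ O) :
    strip O * gadget N ys = strippedGadget N ys.length * (strip O : Module.End ℤ (HG d)) := by
  induction ys with
  | nil => simp [gadget, strippedGadget]
  | cons y ys ih =>
    have hc : N + ys.length ∉ O := fun h => absurd (hN _ h) (by omega)
    rw [gadget, List.length_cons, strippedGadget, ← mul_assoc, mul_sub,
      strip_mul_cone_of_mem (hys y List.mem_cons_self), strip_mul_cone_of_notMem hc,
      ← one_sub_mul, mul_assoc, ih fun z hz => hys z (List.mem_cons_of_mem y hz), mul_assoc]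

noncomputable def meetsFewer (O : Finset ℕ) (m : ℕ) : Submodule ℤ (HG d) :=
  supported _ ℤ {e | (e ∩ O).card < m}

lemma cone_mem_meetsFewer {O : Finset ℕ} {m : ℕ} {M : HG d} (hM : M ∈ meetsFewer O m) (a : ℕ) :
    cone a M ∈ meetsFewer O (m + 1) := by
  refine mapDomain_mem_supported ℤ fun e he => ?_
  have hsub : insert a e ∩ O ⊆ insert a (e ∩ O) := by
    intro x
    simp only [Finset.mem_inter, Finset.mem_insert]
    tauto
  have he : (e ∩ O).card < m := hM he
  exact ((Finset.card_le_card hsub).trans (Finset.card_insert_le _ _)).trans_lt (by omega)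

lemma cone_mem_meetsFewer_of_notMem {O : Finset ℕ} {m a : ℕ} {M : HG d}
    (hM : M ∈ meetsFewer O m) (ha : a ∉ O) : cone a M ∈ meetsFewer O m :=
  mapDomain_mem_supported ℤ fun e he => by
    rw [Set.mem_ofPred_eq, Finset.insert_inter_of_notMem ha]
    exact hM he

lemma meetsFewer_mono (O : Finset ℕ) {m m' : ℕ} (h : m ≤ m') :
    (meetsFewer O m : Submodule ℤ (HG d)) ≤ meetsFewer O m' :=
  supported_mono fun _ he => lt_of_lt_of_le he h

lemma gadget_mem_meetsFewer {O : Finset ℕ} {N m : ℕ} (hN : ∀ x ∈ O, x < N) {L : HG d}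
    (hL : L ∈ meetsFewer O m) (ys : List ℕ) : gadget N ys L ∈ meetsFewer O (m + ys.length) := by
  induction ys with
  | nil => exact hL
  | cons y ys ih =>
    have hc : N + ys.length ∉ O := fun h => absurd (hN _ h) (by omega)
    rw [gadget_cons_apply, List.length_cons, ← Nat.add_assoc]
    exact Submodule.sub_mem _ (cone_mem_meetsFewer ih y)
      (meetsFewer_mono O (Nat.le_succ _) (cone_mem_meetsFewer_of_notMem ih hc))

noncomputable def coneSet (Y : Finset ℕ) : HG d →ₗ[ℤ] HG d := lmapDomain _ ℤ (Y ∪ ·)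

lemma coneSet_empty_apply (L : HG d) : coneSet ∅ L = L :=
  mapDomain_eq_self fun e _ => Finset.empty_union e

lemma cone_coneSet (y : ℕ) (Y : Finset ℕ) (L : HG d) :
    cone y (coneSet Y L) = coneSet (insert y Y) L := by
  rw [cone_apply, coneSet, coneSet, lmapDomain_apply, lmapDomain_apply, ← mapDomain_comp]
  congr 1
  funext e
  exact (Finset.insert_union y Y e).symm

lemma coneSet_link (Y : Finset ℕ) (H : HG d) : coneSet Y (link Y H) = H.filter (Y ⊆ ·) := by
  rw [coneSet, lmapDomain_apply, link, ← mapDomain_comp]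
  refine mapDomain_eq_self fun e he => Finset.union_sdiff_of_subset ?_
  rw [support_filter, Finset.mem_filter] at he
  exact he.2

/-- Every term of the product but one trades some `y ∈ O` for a partner outside `O`. -/
lemma gadget_sub_coneSet_mem_meetsFewer {O : Finset ℕ} {N : ℕ} (hN : ∀ x ∈ O, x < N)
    {L : HG d} (hL : L ∈ meetsFewer O 1) {ys : List ℕ} (hys : ∀ y ∈ ys, y ∈ O) :
    gadget N ys L - coneSet ys.toFinset L ∈ meetsFewer O ys.length := by
  induction ys with
  | nil => simp [gadget, coneSet_empty_apply]
  | cons y ys ih =>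
    have hc : N + ys.length ∉ O := fun h => absurd (hN _ h) (by omega)
    have hsplit : gadget N (y :: ys) L - coneSet (y :: ys).toFinset L =
        cone y (gadget N ys L - coneSet ys.toFinset L) - cone (N + ys.length) (gadget N ys L) := by
      rw [gadget_cons_apply, List.toFinset_cons, ← cone_coneSet, map_sub]
      abel
    rw [hsplit, List.length_cons]
    refine Submodule.sub_mem _ (cone_mem_meetsFewer (ih fun z hz => hys z ?_) y)
      (cone_mem_meetsFewer_of_notMem ?_ hc)
    · exact List.mem_cons_of_mem y hz
    · simpa [Nat.add_comm] using gadget_mem_meetsFewer hN hL ys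

/-! ### Cancelling the layers -/

lemma mem_meetsFewer_of_isHG {k : ℕ} {H : HG d} (hH : IsHG k H) (O : Finset ℕ) :
    H ∈ meetsFewer O (k + 1) := fun e he =>
  Nat.lt_succ_of_le ((Finset.card_le_card Finset.inter_subset_left).trans (hH e he).le)

lemma eq_zero_of_strip_eq_zero {O : Finset ℕ} {H : HG d} (hH : H ∈ meetsFewer O 1)
    (h : strip O H = 0) : H = 0 := by
  rw [← h, strip_apply, mapDomain_eq_self fun e he => ?_]
  have he : (e ∩ O).card < 1 := hH he
  exact Finset.sdiff_eq_self_of_disjoint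
    (Finset.disjoint_iff_inter_eq_empty.mpr (Finset.card_eq_zero.mp (by omega)))

lemma strip_eq_single_weight {O : Finset ℕ} {H : HG d} (h : ∀ e ∈ H.support, e ⊆ O) :
    strip O H = single ∅ (weight ∅ H) := by
  rw [strip_apply, mapDomain_congr (g := fun _ => ∅) fun e he =>
    Finset.sdiff_eq_empty_iff_subset.mpr (h e he)]
  unfold weight
  rw [Finset.filter_true_of_mem fun e _ => Finset.empty_subset e, mapDomain, Finsupp.sum,
    Finsupp.single_finsetSum]

lemma link_mem_meetsFewer_one {O Y : Finset ℕ} {m : ℕ} {H : HG d} (hH : H ∈ meetsFewer O (m + 2))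
    (hYO : Y ⊆ O) (hY : Y.card = m + 1) : link Y H ∈ meetsFewer O 1 := by
  intro f hf
  obtain ⟨e, he, hYe, rfl⟩ := exists_of_mem_support_link hf
  have hsub : (e \ Y) ∩ O ∪ Y ⊆ e ∩ O := Finset.union_subset
    (Finset.inter_subset_inter_right Finset.sdiff_subset) (Finset.subset_inter hYe hYO)
  have hdisj : Disjoint ((e \ Y) ∩ O) Y :=
    Finset.disjoint_of_subset_left Finset.inter_subset_left Finset.sdiff_disjoint
  have hcard := Finset.card_le_card hsub
  have he : (e ∩ O).card < m + 2 := hH he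
  rw [Finset.card_union_of_disjoint hdisj] at hcard
  show ((e \ Y) ∩ O).card < 1
  omega

lemma strip_link {O Y : Finset ℕ} (hYO : Y ⊆ O) (H : HG d) :
    strip O (link Y H) = strip O (H.filter (Y ⊆ ·)) := by
  rw [strip_apply, strip_apply, link, ← mapDomain_comp]
  congr 1
  funext e
  simp [sdiff_sdiff_left, Finset.union_eq_right.mpr hYO]

lemma sum_filter_subset_eq_filter {O : Finset ℕ} {m : ℕ} {H : HG d}
    (hH : H ∈ meetsFewer O (m + 2)) :
    ∑ Y ∈ O.powersetCard (m + 1), H.filter (Y ⊆ ·) = H.filter fun e => (e ∩ O).card = m + 1 := by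
  ext e : 1
  rw [finsetSum_apply, filter_apply]
  by_cases he : e ∈ H.support
  · have hcard : (e ∩ O).card < m + 2 := hH he
    have hiff : ∀ Y ∈ O.powersetCard (m + 1), Y ⊆ e ↔ e ∩ O = Y := fun Y hY => by
      rw [Finset.mem_powersetCard] at hY
      refine ⟨fun hYe => (Finset.eq_of_subset_of_card_le (Finset.subset_inter hYe hY.1)
        (by omega)).symm, fun h => h ▸ Finset.inter_subset_left⟩
    simp only [filter_apply]
    rw [Finset.sum_congr rfl fun Y hY => if_congr (hiff Y hY) rfl rfl, Finset.sum_ite_eq]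
    simp [Finset.mem_powersetCard, Finset.inter_subset_right]
  · simp [notMem_support_iff.mp he, filter_apply]

/-- Stripping `O` keeps the vertices outside `O`, whose number tells the layers of a `k`-graph
apart. -/
lemma strip_filter_eq_zero {k : ℕ} {O : Finset ℕ} {m : ℕ} {H : HG d} (hk : IsHG k H)
    (hH : H ∈ meetsFewer O (m + 2)) (h : strip O H = 0) :
    strip O (H.filter fun e => (e ∩ O).card = m + 1) = 0 := by
  set T := H.filter fun e => (e ∩ O).card = m + 1
  set B := H.filter fun e => ¬ (e ∩ O).card = m + 1
  have hcard : ∀ e ∈ H.support, (e \ O).card + (e ∩ O).card = k := fun e he =>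
    (Finset.card_sdiff_add_card_inter e O).trans (hk e he)
  have hT : strip O T ∈ supported (Fin d → ℤ) ℤ {f : Finset ℕ | f.card + (m + 1) = k} :=
    mapDomain_mem_supported ℤ fun e he => by
      rw [support_filter, Finset.mem_filter] at he
      have := hcard e he.1
      simp only [Set.mem_ofPred_eq]
      omega
  have hB : strip O B ∈ supported (Fin d → ℤ) ℤ {f : Finset ℕ | k < f.card + (m + 1)} :=
    mapDomain_mem_supported ℤ fun e he => by
      rw [support_filter, Finset.mem_filter] at he
      have := hcard e he.1
      have : (e ∩ O).card < m + 2 := hH he.1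
      simp only [Set.mem_ofPred_eq]
      omega
  have hTB : strip O T = -strip O B := by
    rw [eq_neg_iff_add_eq_zero, ← map_add, filter_add_filter_not, h]
  refine Submodule.disjoint_def.mp (disjoint_supported_supported ?_) _ hT
    (hTB ▸ Submodule.neg_mem _ hB)
  exact Set.disjoint_left.mpr fun f (h₁ : _ = k) (h₂ : k < _) => by omega

/-- The gadgets cancelling the hyperedges of `H` with exactly `m + 1` vertices in `O`. -/
noncomputable def layerGadget (O : Finset ℕ) (N m : ℕ) (H : HG d) : HG d :=
  ∑ Y ∈ O.powersetCard (m + 1), gadget N Y.sort (link Y H)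

lemma gadgetFresh_link {O Y : Finset ℕ} {N : ℕ} {H : HG d} (hN : ∀ x ∈ O ∪ verts H, x < N)
    (hYO : Y ⊆ O) : GadgetFresh N Y.sort (link Y H) := by
  have hlink : ∀ x ∈ verts (link Y H), x ∈ verts H ∧ x ∉ Y := fun x hx =>
    Finset.mem_sdiff.mp (verts_link_subset Y H hx)
  refine ⟨Finset.sort_nodup _ _, fun y hy => ?_,
    fun x hx => hN x (Finset.mem_union_right _ (hlink x hx).1)⟩
  rw [Finset.mem_sort] at hy
  exact ⟨hN y (Finset.mem_union_left _ (hYO hy)), fun h => (hlink y h).2 hy⟩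

lemma layerGadget_mem_eqsSpan {𝒢 : Set (HG d)} {O : Finset ℕ} {N m : ℕ} {H : HG d}
    (hN : ∀ x ∈ O ∪ verts H, x < N)
    (hlinks : ∀ Y ∈ O.powersetCard (m + 1), link Y H ∈ eqsSpan (links^[m + 1] 𝒢)) :
    layerGadget O N m H ∈ eqsSpan 𝒢 := by
  refine Submodule.sum_mem _ fun Y hY => gadget_mem_eqsSpan ?_ ?_
  · exact gadgetFresh_link hN (Finset.mem_powersetCard.mp hY).1
  · rw [Finset.length_sort, (Finset.mem_powersetCard.mp hY).2]
    exact hlinks Y hY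

lemma isHG_layerGadget {k : ℕ} {O : Finset ℕ} {N m : ℕ} {H : HG d} (hH : IsHG k H)
    (hmk : m + 1 ≤ k) (hN : ∀ x ∈ O ∪ verts H, x < N) : IsHG k (layerGadget O N m H) := by
  refine isHG_iff_mem_supported.mpr (Submodule.sum_mem _ fun Y hY => ?_)
  rw [Finset.mem_powersetCard] at hY
  have h := isHG_gadget (gadgetFresh_link hN hY.1) (isHG_link hH Y)
  rwa [Finset.length_sort, hY.2, Nat.sub_add_cancel hmk, isHG_iff_mem_supported] at h

lemma sub_layerGadget_mem_meetsFewer {O : Finset ℕ} {N m : ℕ} {H : HG d}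
    (hH : H ∈ meetsFewer O (m + 2)) (hN : ∀ x ∈ O ∪ verts H, x < N) :
    H - layerGadget O N m H ∈ meetsFewer O (m + 1) := by
  have hsplit : H - layerGadget O N m H = H.filter (fun e => ¬ (e ∩ O).card = m + 1) -
      ∑ Y ∈ O.powersetCard (m + 1),
        (gadget N Y.sort (link Y H) - coneSet Y.sort.toFinset (link Y H)) := by
    simp only [Finset.sort_toFinset, coneSet_link]
    rw [Finset.sum_sub_distrib, sum_filter_subset_eq_filter hH, layerGadget]
    set L := ∑ Y ∈ O.powersetCard (m + 1), gadget N Y.sort (link Y H)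
    calc H - L = H.filter (fun e => (e ∩ O).card = m + 1)
          + H.filter (fun e => ¬ (e ∩ O).card = m + 1) - L := by rw [filter_add_filter_not]
      _ = _ := by abel
  rw [hsplit]
  refine Submodule.sub_mem _ (fun e he => ?_) (Submodule.sum_mem _ fun Y hY => ?_)
  · rw [Finset.mem_coe, support_filter, Finset.mem_filter] at he
    have : (e ∩ O).card < m + 2 := hH he.1
    show (e ∩ O).card < m + 1
    omega
  · rw [Finset.mem_powersetCard] at hY
    have h := gadget_sub_coneSet_mem_meetsFewer (fun x hx => hN x (Finset.mem_union_left _ hx))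
      (link_mem_meetsFewer_one hH hY.1 hY.2) (ys := Y.sort)
      fun y hy => hY.1 ((Finset.mem_sort _).mp hy)
    rwa [Finset.length_sort, hY.2] at h

lemma strip_layerGadget {k : ℕ} {O : Finset ℕ} {N m : ℕ} {H : HG d} (hk : IsHG k H)
    (hH : H ∈ meetsFewer O (m + 2)) (hstrip : strip O H = 0) (hN : ∀ x ∈ O ∪ verts H, x < N) :
    strip O (layerGadget O N m H) = 0 := by
  have hterm : ∀ Y ∈ O.powersetCard (m + 1), strip O (gadget N Y.sort (link Y H)) =
      strippedGadget N (m + 1) (strip O (H.filter (Y ⊆ ·))) := fun Y hY => by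
    rw [Finset.mem_powersetCard] at hY
    rw [← Module.End.mul_apply, strip_mul_gadget (fun x hx => hN x (Finset.mem_union_left _ hx))
      fun y hy => hY.1 ((Finset.mem_sort _).mp hy), Module.End.mul_apply, Finset.length_sort, hY.2,
      strip_link hY.1]
  rw [layerGadget, map_sum, Finset.sum_congr rfl hterm, ← map_sum, ← map_sum,
    sum_filter_subset_eq_filter hH, strip_filter_eq_zero hk hH hstrip, map_zero]

lemma mem_eqsSpan_of_strip_eq_zero {k : ℕ} {𝒢 : Set (HG d)} {O : Finset ℕ}
    (hlinks : ∀ H : HG d, IsHG k H → H ∈ locallyZSum 𝒢 → ∀ Y : Finset ℕ, 0 < Y.card →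
      Y.card ≤ k → link Y H ∈ eqsSpan (links^[Y.card] 𝒢))
    (m : ℕ) {H : HG d} (hk : IsHG k H) (hH : H ∈ meetsFewer O (m + 1))
    (hloc : H ∈ locallyZSum 𝒢) (hstrip : strip O H = 0) : H ∈ eqsSpan 𝒢 := by
  induction m generalizing H with
  | zero => simp [eq_zero_of_strip_eq_zero hH hstrip]
  | succ m ih =>
    by_cases hmk : m + 1 ≤ k
    · obtain ⟨N, hN⟩ := (O ∪ verts H).exists_nat_subset_range
      replace hN : ∀ x ∈ O ∪ verts H, x < N := fun x hx => Finset.mem_range.mp (hN hx)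
      have hG : layerGadget O N m H ∈ eqsSpan 𝒢 := layerGadget_mem_eqsSpan hN fun Y hY => by
        rw [Finset.mem_powersetCard] at hY
        simpa [hY.2] using hlinks H hk hloc Y (by omega) (by omega)
      have hrest := ih (isHG_sub hk (isHG_layerGadget hk hmk hN))
        (sub_layerGadget_mem_meetsFewer hH hN)
        (Submodule.sub_mem _ hloc (eqsSpan_le_locallyZSum 𝒢 hG))
        (by rw [map_sub, hstrip, strip_layerGadget hk hH hstrip hN, sub_zero])
      simpa using Submodule.add_mem _ hrest hG
    · exact ih hk (meetsFewer_mono O (by omega) (mem_meetsFewer_of_isHG hk O)) hloc hstrip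

theorem mem_eqsSpan_of_mem_locallyZSum {k : ℕ} {𝒢 : Set (HG d)} (h𝒢 : ∀ G ∈ 𝒢, IsHG k G)
    {H : HG d} (hH : IsHG k H) (hloc : H ∈ locallyZSum 𝒢) : H ∈ eqsSpan 𝒢 := by
  induction k using Nat.strong_induction_on generalizing 𝒢 H with
  | _ k ih =>
  have hlinks : ∀ H : HG d, IsHG k H → H ∈ locallyZSum 𝒢 → ∀ Y : Finset ℕ, 0 < Y.card →
      Y.card ≤ k → link Y H ∈ eqsSpan (links^[Y.card] 𝒢) := fun H hH hloc Y hY hYk =>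
    ih (k - Y.card) (by omega) (isHG_of_mem_links_iterate h𝒢 _) (isHG_link hH Y)
      (link_mem_locallyZSum hloc Y)
  obtain ⟨G, hG, hw⟩ := weightSpan_zero_le 𝒢 (mem_locallyZSum.mp hloc ∅)
  have hGk : IsHG k G := isHG_iff_mem_supported.mpr <|
    Submodule.span_le.mpr (fun G hG => isHG_iff_mem_supported.mp (h𝒢 G hG)) hG
  have hGeqs : G ∈ eqsSpan 𝒢 := Submodule.span_mono (fun _ => mem_Eqs_of_mem) hG
  have hH₀ : H - G ∈ eqsSpan 𝒢 := by
    refine mem_eqsSpan_of_strip_eq_zero (O := verts (H - G)) hlinks k (isHG_sub hH hGk)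
      (mem_meetsFewer_of_isHG (isHG_sub hH hGk) _)
      (Submodule.sub_mem _ hloc (eqsSpan_le_locallyZSum 𝒢 hGeqs)) ?_
    rw [strip_eq_single_weight fun e => subset_verts, ← weightₗ_apply, map_sub, weightₗ_apply, hw,
      sub_self, single_zero]
  simpa using Submodule.add_mem _ hH₀ hGeqs

end HG

theorem zsum_iff_locally_zsum_general
    (k d : ℕ)
    (𝓗 : Set (HG d)) (h𝓗 : ∀ G ∈ 𝓗, IsHG k G)
    (H : HG d) (hH : IsHG k H)
    (V : Finset ℕ) (hV : verts H ⊆ V) :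
    H ∈ Zsum (Eqs 𝓗) ↔
      ∀ X : Finset ℕ, X ⊆ V → X.card ≤ k →
        weight X H ∈ Submodule.span ℤ
          {w : Fin d → ℤ | ∃ G ∈ 𝓗, ∃ X' : Finset ℕ,
            X' ⊆ verts G ∧ X'.card = X.card ∧ w = weight X' G} := by
  rw [HG.mem_Zsum_iff]
  refine ⟨fun h X _ _ => HG.mem_locallyZSum.mp (HG.eqsSpan_le_locallyZSum 𝓗 h) X, fun h => ?_⟩
  refine HG.mem_eqsSpan_of_mem_locallyZSum h𝓗 hH (HG.mem_locallyZSum.mpr fun X => ?_)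
  by_cases hX : X ⊆ V ∧ X.card ≤ k
  · exact h X hX.1 hX.2
  · rw [HG.weight_eq_zero_of_forall_not_subset fun e he hXe => hX
      ⟨hXe.trans ((HG.subset_verts he).trans hV), (Finset.card_le_card hXe).trans (hH e he).le⟩]
    exact Submodule.zero_mem _

/-- **Theorem (local characterisation of `ℤ`-solvability).**
For `k, d ≥ 1`, a finite family `𝓗` of `k`-hypergraphs of dimension `d` and a
`k`-hypergraph `H` with vertex set `V`:  `H` is a `ℤ`-sum of hypergraphs
equivalent to members of `𝓗` iff `H` is locally a `ℤ`-sum of `𝓗`, i.e. for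
every `X ⊆ V` with `|X| ≤ k` the weight `w_X(H)` lies in the `ℤ`-span of the
weights `w_{X'}(H')` for `H' ∈ 𝓗` and `X'` a subset of the vertices of `H'`
with `|X'| = |X|`. -/
theorem zsum_iff_locally_zsum
    (k d : ℕ) (hk : 1 ≤ k) (hd : 1 ≤ d)
    (𝓗 : Set (HG d)) (h𝓗fin : 𝓗.Finite) (h𝓗 : ∀ G ∈ 𝓗, IsHG k G)
    (H : HG d) (hH : IsHG k H)
    (V : Finset ℕ) (hV : verts H ⊆ V) :
    H ∈ Zsum (Eqs 𝓗) ↔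
      ∀ X : Finset ℕ, X ⊆ V → X.card ≤ k →
        weight X H ∈ Submodule.span ℤ
          {w : Fin d → ℤ | ∃ G ∈ 𝓗, ∃ X' : Finset ℕ,
            X' ⊆ verts G ∧ X'.card = X.card ∧ w = weight X' G} :=
  zsum_iff_locally_zsum_general k d 𝓗 h𝓗 H hH V hV
end

section
/- For every k ≥ 1, the reduction matrix M^{2k+1}_{k+1,k} has maximal rank; that is, this square 0–1 matrix of size binom(2k+1, k) is invertible over ℚ (its rank equals binom(2k+1, k)). -/
open Finset Matrix

lemma card_filter_supersets {n m : ℕ} (u : Finset (Fin n)) (hu : u.card ≤ m) :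
    (Finset.univ.filter (fun B : Finset (Fin n) => u ⊆ B ∧ B.card = m)).card
      = (n - u.card).choose (m - u.card) := by
  have hc : uᶜ.card = n - u.card := by
    rw [Finset.card_compl, Fintype.card_fin]
  rw [← hc, ← Finset.card_powersetCard]
  apply Finset.card_bij' (fun B _ => B \ u) (fun s _ => s ∪ u)
  · intro B hB
    simp only [Finset.mem_filter, Finset.mem_univ, true_and] at hB
    rw [Finset.mem_powersetCard]
    constructor
    · intro x hx
      simp only [Finset.mem_sdiff] at hx
      simp [hx.2]
    · rw [Finset.card_sdiff_of_subset hB.1, hB.2]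
  · intro s hs
    rw [Finset.mem_powersetCard] at hs
    have hd : Disjoint s u := by
      rw [Finset.disjoint_left]
      intro x hx
      have := hs.1 hx
      simpa using this
    simp only [Finset.mem_filter, Finset.mem_univ, true_and]
    refine ⟨Finset.subset_union_right, ?_⟩
    rw [Finset.card_union_of_disjoint hd, hs.2]
    omega
  · intro B hB
    simp only [Finset.mem_filter, Finset.mem_univ, true_and] at hB
    rw [Finset.sdiff_union_of_subset hB.1]
  · intro s hs
    rw [Finset.mem_powersetCard] at hs
    have hd : Disjoint s u := by
      rw [Finset.disjoint_left]
      intro x hx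
      have := hs.1 hx
      simpa using this
    rw [Finset.union_sdiff_cancel_right hd]

lemma card_filter_subsets {n : ℕ} (t : Finset (Fin n)) (r : ℕ) :
    (Finset.univ.filter (fun B : Finset (Fin n) => B ⊆ t ∧ B.card = r)).card
      = t.card.choose r := by
  rw [← Finset.card_powersetCard]
  congr 1
  ext B
  simp [Finset.mem_powersetCard]

lemma key_count {k : ℕ} (hk : 1 ≤ k) (C C' : Finset (Fin (2*k+1)))
    (hC : C.card = k) (hC' : C'.card = k) :
    (Finset.univ.filter (fun B : Finset (Fin (2*k+1)) => C ∪ C' ⊆ B ∧ B.card = k+1)).card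
      = (Finset.univ.filter (fun B : Finset (Fin (2*k+1)) => B ⊆ C ∩ C' ∧ B.card = k-1)).card
        + (if C = C' then 1 else 0) := by
  have hsum : (C ∪ C').card + (C ∩ C').card = 2 * k := by
    rw [Finset.card_union_add_card_inter, hC, hC']; omega
  rcases eq_or_ne C C' with h | h
  · subst h
    rw [if_pos rfl, Finset.union_self, Finset.inter_self,
      card_filter_supersets C (by omega), card_filter_subsets, hC]
    have h1 : 2*k+1 - k = k+1 := by omega
    have h2 : k+1-k = 1 := by omega
    have h3 : k.choose (k-1) = k := by
      rw [← Nat.choose_symm (by omega : k-1 ≤ k)]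
      have : k - (k-1) = 1 := by omega
      rw [this, Nat.choose_one_right]
    rw [h1, h2, h3, Nat.choose_one_right]
  · simp only [if_neg h, add_zero, card_filter_subsets]
    have hm : (C ∩ C').card < k := by
      rcases lt_or_eq_of_le (le_trans (Finset.card_le_card Finset.inter_subset_left) hC.le) with h' | h'
      · exact h'
      · exfalso
        have : C ∩ C' = C := Finset.eq_of_subset_of_card_le Finset.inter_subset_left (by rw [h', hC])
        have hCC : C ⊆ C' := by rw [← this]; exact Finset.inter_subset_right
        exact h (Finset.eq_of_subset_of_card_le hCC (by rw [hC, hC']))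
    rcases eq_or_lt_of_le (by omega : (C ∩ C').card ≤ k - 1) with hm1 | hm1
    · have hu : (C ∪ C').card = k + 1 := by omega
      rw [card_filter_supersets _ (by omega), hu, ← hm1, Nat.choose_self]
      simp
    · rw [Nat.choose_eq_zero_of_lt hm1]
      rw [Finset.card_eq_zero, Finset.filter_eq_empty_iff]
      intro B _
      rintro ⟨hsub, hcard⟩
      have := Finset.card_le_card hsub
      omega

lemma subtype_filter_card {n c : ℕ} (p : Finset (Fin n) → Prop) [DecidablePred p] :
    (Finset.univ.filter (fun B : {s : Finset (Fin n) // s.card = c} => p B.1)).card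
      = (Finset.univ.filter (fun B : Finset (Fin n) => p B ∧ B.card = c)).card := by
  refine Finset.card_bij' (fun B _ => B.1)
    (fun B hB => (⟨B, (Finset.mem_filter.mp hB).2.2⟩ : {s : Finset (Fin n) // s.card = c}))
    ?_ ?_ (fun B _ => Subtype.ext rfl) (fun B _ => rfl)
  · intro B hB
    simp only [Finset.mem_filter, Finset.mem_univ, true_and] at hB
    exact Finset.mem_filter.mpr ⟨Finset.mem_univ _, hB, B.2⟩
  · intro B hB
    simp only [Finset.mem_filter, Finset.mem_univ, true_and] at hB ⊢
    exact hB.1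

/-- **Lemma (reduction matrices have maximal rank).**
For `k ≥ 1`, the reduction matrix `M^{2k+1}_{k+1,k}` — the 0–1 matrix whose
rows are indexed by the `k`-element subsets and whose columns are indexed by
the `(k+1)`-element subsets of a `(2k+1)`-element set, with entry `1` at
`(C, B)` iff `C ⊆ B` — has maximal rank over `ℚ`: its rank equals
`binom(2k+1, k)` (the number of its rows, which also equals the number of its
columns, so this square matrix is invertible over `ℚ`). -/
theorem reduction_matrix_max_rank (k : ℕ) (hk : 1 ≤ k) :
    Matrix.rank
      (Matrix.of (fun (C : {s : Finset (Fin (2 * k + 1)) // s.card = k})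
          (B : {s : Finset (Fin (2 * k + 1)) // s.card = k + 1}) =>
        if (C : Finset (Fin (2 * k + 1))) ⊆ (B : Finset (Fin (2 * k + 1)))
          then (1 : ℚ) else 0))
      = (2 * k + 1).choose k := by
  set M : Matrix {s : Finset (Fin (2 * k + 1)) // s.card = k}
      {s : Finset (Fin (2 * k + 1)) // s.card = k + 1} ℚ :=
    Matrix.of (fun C B => if (C : Finset (Fin (2 * k + 1))) ⊆ (B : Finset (Fin (2 * k + 1)))
      then (1 : ℚ) else 0) with hM
  set N : Matrix {s : Finset (Fin (2 * k + 1)) // s.card = k}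
      {s : Finset (Fin (2 * k + 1)) // s.card = k - 1} ℚ :=
    Matrix.of (fun C B => if (B : Finset (Fin (2 * k + 1))) ⊆ (C : Finset (Fin (2 * k + 1)))
      then (1 : ℚ) else 0) with hN
  have hMM : M * Mᵀ = N * Nᵀ + 1 := by
    ext C C'
    simp only [Matrix.mul_apply, Matrix.transpose_apply, Matrix.add_apply, Matrix.one_apply,
      hM, hN, Matrix.of_apply, ite_zero_mul_ite_zero, mul_one]
    have e1 : ∀ B : {s : Finset (Fin (2 * k + 1)) // s.card = k + 1},
        ((C.1 ⊆ B.1 ∧ C'.1 ⊆ B.1)) ↔ (C.1 ∪ C'.1 ⊆ B.1) := by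
      intro B; rw [Finset.union_subset_iff]
    have e2 : ∀ B : {s : Finset (Fin (2 * k + 1)) // s.card = k - 1},
        ((B.1 ⊆ C.1 ∧ B.1 ⊆ C'.1)) ↔ (B.1 ⊆ C.1 ∩ C'.1) := by
      intro B; rw [Finset.subset_inter_iff]
    simp only [e1, e2, Finset.sum_boole]
    rw [subtype_filter_card (fun B => C.1 ∪ C'.1 ⊆ B),
      subtype_filter_card (fun B => B ⊆ C.1 ∩ C'.1)]
    rw [key_count hk C.1 C'.1 C.2 C'.2]
    push_cast
    congr 1
    simp [Subtype.ext_iff]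
  have hker : ∀ v, (M * Mᵀ) *ᵥ v = 0 → v = 0 := by
    intro v hv
    have h1 : v ⬝ᵥ ((M * Mᵀ) *ᵥ v) = 0 := by rw [hv, dotProduct_zero]
    rw [hMM, Matrix.add_mulVec, Matrix.one_mulVec, dotProduct_add,
      ← Matrix.mulVec_mulVec, Matrix.dotProduct_mulVec, ← Matrix.mulVec_transpose] at h1
    have h2 : (0:ℚ) ≤ (Nᵀ *ᵥ v) ⬝ᵥ (Nᵀ *ᵥ v) :=
      Finset.sum_nonneg fun i _ => mul_self_nonneg _
    have h3 : (0:ℚ) ≤ v ⬝ᵥ v := Finset.sum_nonneg fun i _ => mul_self_nonneg _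
    have h4 : v ⬝ᵥ v = 0 := by linarith
    exact dotProduct_self_eq_zero.mp h4
  have hdet : (M * Mᵀ).det ≠ 0 := by
    intro h0
    obtain ⟨v, hv, hv0⟩ := (Matrix.exists_mulVec_eq_zero_iff).mpr h0
    exact hv (hker v hv0)
  have hunit : IsUnit (M * Mᵀ) := (Matrix.isUnit_iff_isUnit_det _).mpr (isUnit_iff_ne_zero.mpr hdet)
  have hcard : Fintype.card {s : Finset (Fin (2 * k + 1)) // s.card = k} = (2 * k + 1).choose k := by
    rw [Fintype.card_finset_len, Fintype.card_fin]
  have hrank1 : (M * Mᵀ).rank = (2 * k + 1).choose k := by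
    rw [Matrix.rank_of_isUnit _ hunit, hcard]
  refine le_antisymm ?_ ?_
  · calc M.rank ≤ Fintype.card {s : Finset (Fin (2 * k + 1)) // s.card = k} :=
        Matrix.rank_le_card_height M
      _ = (2 * k + 1).choose k := hcard
  · rw [← hrank1]
    exact Matrix.rank_mul_le_left M Mᵀ
end

section
/- For integers a and c with 1 ≤ c and 2c ≤ a, the adjacency matrix of the Kneser graph K_{a,c} has maximal rank; that is, this square 0–1 matrix of size binom(a, c) is invertible over ℚ (its rank equals binom(a, c)). -/
/-!
The inverse of the Kneser matrix is sought among the matrices `E f` with `E f (y, z) = f |y ∩ z|`.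
If `x, z` are `c`-sets with `m = |z \ x|`, then the `c`-sets `y` disjoint from `x` with
`|y ∩ z| = j` number `C(m, j) C(a - c - m, c - j)`, so the `(x, z)` entry of `M (E f)` is
`∑ j, C(m, j) C(a - c - m, c - j) f j`. Asking this to be `[m = 0]` (that is, `[x = z]`) is a
lower triangular system in `f 0, …, f c` whose diagonal entries `C(a - c - m, c - m)` are
nonzero as `2c ≤ a`, so it can be solved by forward substitution.
-/

open Finset

theorem exists_forall_sum_range_succ_mul_eq {K : Type*} [DivisionRing K] (T : ℕ → ℕ → K)
    (b : ℕ → K) (n : ℕ) (hT : ∀ m < n, T m m ≠ 0) :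
    ∃ f : ℕ → K, ∀ m < n, ∑ j ∈ range (m + 1), T m j * f j = b m := by
  induction n with
  | zero => exact ⟨0, by simp⟩
  | succ n ih =>
    obtain ⟨f, hf⟩ := ih fun m hm => hT m (by omega)
    set x := (T n n)⁻¹ * (b n - ∑ j ∈ range n, T n j * f j)
    refine ⟨Function.update f n x, fun m hm => ?_⟩
    have hagree :
        ∑ j ∈ range m, T m j * Function.update f n x j = ∑ j ∈ range m, T m j * f j :=
      sum_congr rfl fun j hj => by rw [Function.update_of_ne (by grind)]
    rw [sum_range_succ, hagree]
    rcases Nat.lt_succ_iff_lt_or_eq.mp hm with hlt | rfl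
    · rw [Function.update_of_ne hlt.ne, ← sum_range_succ, hf m hlt]
    · rw [Function.update_self, mul_inv_cancel_left₀ (hT m (Nat.lt_succ_self m))]
      abel

theorem union_inter_eq_of_subset_of_disjoint {α : Type*} [DecidableEq α] {u v z : Finset α}
    (huz : u ⊆ z) (hvz : Disjoint v z) : (u ∪ v) ∩ z = u := by
  rw [union_inter_distrib_right, inter_eq_left.mpr huz, disjoint_iff_inter_eq_empty.mp hvz,
    union_empty]

theorem card_filter_card_inter_powersetCard {α : Type*} [DecidableEq α] (s z : Finset α)
    {k j : ℕ} (hjk : j ≤ k) :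
    #{y ∈ s.powersetCard k | #(y ∩ z) = j} =
      (#(s ∩ z)).choose j * (#(s \ z)).choose (k - j) := by
  rw [← card_powersetCard, ← card_powersetCard, ← card_product]
  refine card_nbij' (fun y => (y ∩ z, y \ z)) (fun p => p.1 ∪ p.2) ?_ ?_ ?_ ?_
  · intro y hy
    simp only [coe_filter, mem_powersetCard, Set.mem_ofPred_eq] at hy
    obtain ⟨⟨hys, hyk⟩, hyz⟩ := hy
    have := card_inter_add_card_sdiff y z
    simp only [coe_product, Set.mem_prod, mem_coe, mem_powersetCard]
    exact ⟨⟨inter_subset_inter_right hys, hyz⟩, sdiff_subset_sdiff hys subset_rfl, by omega⟩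
  · rintro ⟨u, v⟩ huv
    simp only [coe_product, Set.mem_prod, mem_coe, mem_powersetCard] at huv
    obtain ⟨⟨hus, hu⟩, hvs, hv⟩ := huv
    have huz : u ⊆ z := hus.trans inter_subset_right
    have hvz : Disjoint v z := disjoint_of_subset_left hvs sdiff_disjoint
    simp only [coe_filter, mem_powersetCard, Set.mem_ofPred_eq,
      union_inter_eq_of_subset_of_disjoint huz hvz, hu, and_true]
    refine ⟨union_subset (hus.trans inter_subset_left) (hvs.trans sdiff_subset), ?_⟩
    rw [card_union_of_disjoint (disjoint_of_subset_left huz hvz.symm), hu, hv]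
    omega
  · intro y _
    exact (union_comm _ _).trans (sdiff_union_inter y z)
  · rintro ⟨u, v⟩ huv
    simp only [coe_product, Set.mem_prod, mem_coe, mem_powersetCard] at huv
    obtain ⟨⟨hus, -⟩, hvs, -⟩ := huv
    have huz : u ⊆ z := hus.trans inter_subset_right
    have hvz : Disjoint v z := disjoint_of_subset_left hvs sdiff_disjoint
    refine Prod.ext (union_inter_eq_of_subset_of_disjoint huz hvz) ?_
    change (u ∪ v) \ z = v
    rw [union_sdiff_distrib, sdiff_eq_empty_iff_subset.mpr huz, empty_union, hvz.sdiff_eq_left]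

theorem sum_powersetCard_apply_card_inter {α β : Type*} [DecidableEq α] [AddCommMonoid β]
    (s z : Finset α) (k : ℕ) (g : ℕ → β) :
    ∑ y ∈ s.powersetCard k, g #(y ∩ z) =
      ∑ j ∈ range (k + 1), ((#(s ∩ z)).choose j * (#(s \ z)).choose (k - j)) • g j := by
  rw [← sum_fiberwise_of_maps_to' (t := range (k + 1)) (g := fun y => #(y ∩ z)) ?_]
  · refine sum_congr rfl fun j hj => ?_
    rw [sum_const, card_filter_card_inter_powersetCard s z (Nat.lt_succ_iff.mp (mem_range.mp hj))]
  · intro y hy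
    rw [mem_range, Nat.lt_succ_iff]
    exact (card_le_card inter_subset_left).trans (mem_powersetCard.mp hy).2.le

section Kneser

variable (α : Type*) [Fintype α] [DecidableEq α] (K : Type*) (c : ℕ)

def kneserMatrix [Zero K] [One K] :
    Matrix {s : Finset α // #s = c} {s : Finset α // #s = c} K :=
  Matrix.of fun x y => if (x : Finset α) ∩ y = ∅ then 1 else 0

def cardInterMatrix (f : ℕ → K) :
    Matrix {s : Finset α // #s = c} {s : Finset α // #s = c} K :=
  Matrix.of fun x y => f #((x : Finset α) ∩ y)

variable {α K c}

theorem kneserMatrix_mul_cardInterMatrix_apply [Semiring K] (f : ℕ → K)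
    (x z : {s : Finset α // #s = c}) :
    (kneserMatrix α K c * cardInterMatrix α K c f) x z =
      ∑ j ∈ range (c + 1), ((#((z : Finset α) \ x)).choose j *
        (Fintype.card α - c - #((z : Finset α) \ x)).choose (c - j) : ℕ) * f j := by
  have hrow : ∀ y : {s : Finset α // #s = c},
      kneserMatrix α K c x y * cardInterMatrix α K c f y z =
        if (x : Finset α) ∩ y = ∅ then f #((y : Finset α) ∩ z) else 0 := fun y => by
    simp only [kneserMatrix, cardInterMatrix, Matrix.of_apply, boole_mul]
  have hdisjoint : {y ∈ powersetCard c (univ : Finset α) | (x : Finset α) ∩ y = ∅} =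
      (xᶜ : Finset α).powersetCard c := by
    ext y
    rw [mem_filter, mem_powersetCard_univ, mem_powersetCard, subset_compl_iff_disjoint_left,
      disjoint_iff_inter_eq_empty, and_comm]
  have hinter : #((xᶜ : Finset α) ∩ z) = #((z : Finset α) \ x) := by
    rw [inter_comm, sdiff_eq_inter_compl]
  have hsdiff : #((xᶜ : Finset α) \ z) = Fintype.card α - c - #((z : Finset α) \ x) := by
    rw [sdiff_eq_inter_compl, ← compl_union, card_compl, ← union_sdiff_self_eq_union,
      card_union_of_disjoint disjoint_sdiff, x.2, Nat.sub_sub]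
  rw [Matrix.mul_apply, sum_congr rfl fun y _ => hrow y,
    ← sum_subtype (powersetCard c (univ : Finset α)) (fun _ => mem_powersetCard_univ)
      (fun y => if (x : Finset α) ∩ y = ∅ then f #(y ∩ z) else 0),
    ← sum_filter, hdisjoint, sum_powersetCard_apply_card_inter, hinter, hsdiff]
  simp only [nsmul_eq_mul]

theorem isUnit_kneserMatrix [Field K] [CharZero K] (h : 2 * c ≤ Fintype.card α) :
    IsUnit (kneserMatrix α K c) := by
  obtain ⟨f, hf⟩ := exists_forall_sum_range_succ_mul_eq
    (fun m j => ((m.choose j * (Fintype.card α - c - m).choose (c - j) : ℕ) : K))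
    (fun m => if m = 0 then 1 else 0) (c + 1) fun m hm => by
      rw [Nat.cast_ne_zero, Nat.choose_self, one_mul]
      exact (Nat.choose_pos (by omega)).ne'
  refine (Matrix.isUnit_iff_isUnit_det _).2
    (Matrix.isUnit_det_of_right_inverse (B := cardInterMatrix α K c f) ?_)
  ext x z
  rw [kneserMatrix_mul_cardInterMatrix_apply, Matrix.one_apply]
  have hm : #((z : Finset α) \ x) ≤ c := (card_le_card sdiff_subset).trans_eq z.2
  rw [← sum_subset (range_subset_range.2 (Nat.succ_le_succ hm)) fun j _ hj => by
    rw [Nat.choose_eq_zero_of_lt (by simpa using hj), zero_mul, Nat.cast_zero, zero_mul],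
    hf _ (by omega)]
  congr 1
  rw [card_eq_zero, sdiff_eq_empty_iff_subset, eq_iff_iff, eq_comm, Subtype.ext_iff]
  exact ⟨fun hzx => eq_of_subset_of_card_le hzx (by rw [x.2, z.2]), fun hzx => hzx.subset⟩

end Kneser

theorem kneser_adjacency_max_rank_general (a c : ℕ) (hac : 2 * c ≤ a) :
    Matrix.rank
      (Matrix.of (fun (x y : {s : Finset (Fin a) // s.card = c}) =>
        if (x : Finset (Fin a)) ∩ (y : Finset (Fin a)) = ∅ then (1 : ℚ) else 0))
      = a.choose c := by
  have hunit : IsUnit (kneserMatrix (Fin a) ℚ c) :=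
    isUnit_kneserMatrix (by rwa [Fintype.card_fin])
  rw [← kneserMatrix, Matrix.rank_of_isUnit _ hunit, Fintype.card_finset_len, Fintype.card_fin]

/-- **Theorem (Kneser graphs: adjacency matrix has maximal rank).**
For `1 ≤ c` and `2c ≤ a`, the adjacency matrix of the Kneser graph `K_{a,c}` —
the 0–1 matrix whose rows and columns are indexed by the `c`-element subsets of
an `a`-element set, with entry `1` at `(x, y)` iff `x ∩ y = ∅` — has maximal
rank over `ℚ`: its rank equals `binom(a, c)`, i.e. this square matrix is
invertible over `ℚ`. -/
theorem kneser_adjacency_max_rank (a c : ℕ) (hc : 1 ≤ c) (hac : 2 * c ≤ a) :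
    Matrix.rank
      (Matrix.of (fun (x y : {s : Finset (Fin a) // s.card = c}) =>
        if (x : Finset (Fin a)) ∩ (y : Finset (Fin a)) = ∅ then (1 : ℚ) else 0))
      = a.choose c :=
  kneser_adjacency_max_rank_general a c hac
end

section
/- If a k-hypergraph H of dimension d is pre m-isolated, then H is m-isolated. -/
/-- `H` is `m`-isolated: `w_X(H) = 0` for every set `X` of vertices of `H`
with `|X| ≤ m`. -/
def IsIsolated {d : ℕ} (m : ℕ) (H : HG d) : Prop :=
  ∀ X : Finset ℕ, X ⊆ verts H → X.card ≤ m → weight X H = 0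
/-- `H` is pre `m`-isolated: `H` is `(m−1)`-isolated, and there is a set `X`
of vertices of `H` with `|X| ≤ 2m−1` such that `w_Y(H) = 0` for every
`m`-element set `Y` of vertices not contained in `X`. -/
def PreIsolated {d : ℕ} (m : ℕ) (H : HG d) : Prop :=
  IsIsolated (m - 1) H ∧
  ∃ X : Finset ℕ, X ⊆ verts H ∧ X.card ≤ 2 * m - 1 ∧
    ∀ Y : Finset ℕ, Y ⊆ verts H → Y.card = m → ¬ Y ⊆ X → weight Y H = 0

open Finset
open scoped Nat

section Combinatorics

variable {α M : Type*} [DecidableEq α] [AddCommGroup M]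

theorem sum_powersetCard_sum_sdiff (F : Finset α → α → M) (X : Finset α) (n : ℕ) :
    ∑ Z ∈ X.powersetCard n, ∑ v ∈ X \ Z, F Z v =
      ∑ W ∈ X.powersetCard (n + 1), ∑ v ∈ W, F (W.erase v) v := by
  rw [sum_sigma', sum_sigma']
  refine sum_bij' (fun p _ => ⟨insert p.2 p.1, p.2⟩) (fun p _ => ⟨p.1.erase p.2, p.2⟩)
    ?_ ?_ ?_ ?_ ?_
  · rintro ⟨Z, v⟩ hp
    simp only [mem_sigma, mem_powersetCard, mem_sdiff] at hp ⊢
    obtain ⟨⟨hZX, rfl⟩, hvX, hvZ⟩ := hp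
    exact ⟨⟨insert_subset hvX hZX, card_insert_of_notMem hvZ⟩, mem_insert_self v Z⟩
  · rintro ⟨W, v⟩ hp
    simp only [mem_sigma, mem_powersetCard, mem_sdiff] at hp ⊢
    obtain ⟨⟨hWX, hW⟩, hvW⟩ := hp
    exact ⟨⟨(erase_subset v W).trans hWX, by rw [card_erase_of_mem hvW, hW, Nat.add_sub_cancel]⟩,
      hWX hvW, notMem_erase v W⟩
  · rintro ⟨Z, v⟩ hp
    simp only [mem_sigma, mem_sdiff] at hp
    simp [erase_insert hp.2.2]
  · rintro ⟨W, v⟩ hp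
    simp only [mem_sigma] at hp
    simp [insert_erase hp.2]
  · rintro ⟨Z, v⟩ hp
    simp only [mem_sigma, mem_sdiff] at hp
    rw [erase_insert hp.2.2]

theorem sum_apply_card_erase_sdiff (g : ℕ → M) (W Y : Finset α) :
    ∑ v ∈ W, g #(W.erase v \ Y) = #(W \ Y) • g (#(W \ Y) - 1) + #(W ∩ Y) • g #(W \ Y) := by
  rw [← sum_inter_add_sum_sdiff W Y, add_comm, ← sum_const, ← sum_const]
  congr 1
  · refine sum_congr rfl fun v hv => ?_
    rw [erase_sdiff_comm, card_erase_of_mem hv]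
  · refine sum_congr rfl fun v hv => ?_
    rw [erase_sdiff_comm, erase_eq_of_notMem fun hv' => (mem_sdiff.mp hv').2 (mem_inter.mp hv).2]

def altCoeff (n j : ℕ) : ℤ := (-1) ^ j * j ! * (n - j)!

theorem succ_mul_altCoeff_add {n j : ℕ} (hj : j < n) :
    (j + 1) * altCoeff n j + (n - j : ℕ) * altCoeff n (j + 1) = 0 := by
  obtain ⟨b, rfl⟩ := Nat.exists_eq_add_of_lt hj
  have h₁ : j + b + 1 - j = b + 1 := by omega
  have h₂ : j + b + 1 - (j + 1) = b := by omega
  simp only [altCoeff, h₁, h₂, Nat.factorial_succ, pow_succ]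
  push_cast
  ring

theorem sum_altCoeff_card_erase_sdiff {n : ℕ} {X Y W : Finset α} (hYX : Y ⊆ X)
    (hY : #Y = n + 1) (hX : #X ≤ 2 * n + 1) (hWX : W ⊆ X) (hW : #W = n + 1) :
    ∑ v ∈ W, altCoeff n #(W.erase v \ Y) = if W = Y then ((n + 1)! : ℤ) else 0 := by
  rw [sum_apply_card_erase_sdiff]
  have hWY_card : #(W ∩ Y) = n + 1 - #(W \ Y) := by
    have := card_inter_add_card_sdiff W Y; omega
  split_ifs with hWY
  · subst hWY
    simp [altCoeff, hW, Nat.factorial_succ]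
  · have hpos : #(W \ Y) ≠ 0 := fun h0 =>
      hWY (eq_of_subset_of_card_le (sdiff_eq_empty_iff_subset.mp (card_eq_zero.mp h0))
        (by rw [hW, hY]))
    have hle : #(W \ Y) ≤ n := by
      have := card_le_card (sdiff_subset_sdiff hWX (le_refl Y))
      rw [card_sdiff_of_subset hYX] at this; omega
    obtain ⟨j, hj⟩ := Nat.exists_eq_succ_of_ne_zero hpos
    rw [hWY_card, hj, Nat.succ_sub_one, show n + 1 - j.succ = n - j by omega]
    simpa only [nsmul_eq_mul, Nat.cast_succ] using succ_mul_altCoeff_add (n := n) (by omega)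

theorem factorial_smul_eq_zero_of_sum_sdiff_insert_eq_zero {f : Finset α → M} {n : ℕ}
    {X Y : Finset α} (hYX : Y ⊆ X) (hY : #Y = n + 1) (hX : #X ≤ 2 * n + 1)
    (h : ∀ Z ∈ X.powersetCard n, ∑ v ∈ X \ Z, f (insert v Z) = 0) :
    (n + 1)! • f Y = 0 := by
  calc (n + 1)! • f Y
      = ∑ W ∈ X.powersetCard (n + 1), (if W = Y then ((n + 1)! : ℤ) else 0) • f W := by
        rw [sum_eq_single_of_mem Y (mem_powersetCard.mpr ⟨hYX, hY⟩)
          fun W _ hWY => by rw [if_neg hWY, zero_smul], if_pos rfl, natCast_zsmul]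
    _ = ∑ W ∈ X.powersetCard (n + 1), ∑ v ∈ W, altCoeff n #(W.erase v \ Y) • f W := by
        refine sum_congr rfl fun W hW => ?_
        obtain ⟨hWX, hW⟩ := mem_powersetCard.mp hW
        rw [← sum_smul, sum_altCoeff_card_erase_sdiff hYX hY hX hWX hW]
    _ = ∑ Z ∈ X.powersetCard n, ∑ v ∈ X \ Z, altCoeff n #(Z \ Y) • f (insert v Z) := by
        rw [sum_powersetCard_sum_sdiff]
        refine sum_congr rfl fun W _ => sum_congr rfl fun v hv => ?_
        rw [insert_erase hv]
    _ = 0 := sum_eq_zero fun Z hZ => by rw [← smul_sum, h Z hZ, smul_zero]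

end Combinatorics

section Hypergraph

variable {d : ℕ}

theorem subset_verts_of_mem_support {H : HG d} {e : Finset ℕ} (he : e ∈ H.support) :
    e ⊆ verts H :=
  le_sup (f := id) he

theorem weight_eq_sum_ite (X : Finset ℕ) (H : HG d) :
    weight X H = ∑ e ∈ H.support, if X ⊆ e then H e else 0 := by
  rw [weight, sum_filter]

theorem sum_weight_insert {k : ℕ} {H : HG d} (hH : IsHG k H) (Z : Finset ℕ) :
    ∑ v ∈ verts H \ Z, weight (insert v Z) H = (k - #Z) • weight Z H := by
  simp only [weight_eq_sum_ite, smul_sum]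
  rw [sum_comm]
  refine sum_congr rfl fun e he => ?_
  by_cases hZe : Z ⊆ e
  · have hins : ∀ v, insert v Z ⊆ e ↔ v ∈ e := fun v => by
      rw [insert_subset_iff]; exact ⟨And.left, fun hv => ⟨hv, hZe⟩⟩
    have hcap : (verts H \ Z) ∩ e = e \ Z := by
      ext v
      simp only [mem_inter, mem_sdiff]
      exact ⟨fun hv => ⟨hv.2, hv.1.2⟩,
        fun hv => ⟨⟨subset_verts_of_mem_support he hv.1, hv.2⟩, hv.1⟩⟩
    simp only [hins, if_pos hZe]
    rw [sum_ite_mem, sum_const, hcap, card_sdiff_of_subset hZe, hH e he]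
  · simp only [if_neg hZe, smul_zero]
    exact sum_eq_zero fun v _ => if_neg fun h => hZe ((subset_insert v Z).trans h)

theorem sum_sdiff_weight_insert_eq_zero {k : ℕ} {H : HG d} (hH : IsHG k H) {X Z : Finset ℕ}
    (hXV : X ⊆ verts H) (hZ : weight Z H = 0)
    (hout : ∀ v ∈ verts H, v ∉ X → weight (insert v Z) H = 0) :
    ∑ v ∈ X \ Z, weight (insert v Z) H = 0 := by
  rw [sum_subset (sdiff_subset_sdiff hXV le_rfl), sum_weight_insert hH, hZ, smul_zero]
  intro v hv hvX
  exact hout v (mem_sdiff.mp hv).1 fun h => hvX (mem_sdiff.mpr ⟨h, (mem_sdiff.mp hv).2⟩)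

end Hypergraph

theorem preIsolated_isolated_general
    (k d m : ℕ)
    (H : HG d) (hH : IsHG k H) (hpre : PreIsolated m H) :
    IsIsolated m H := by
  obtain ⟨hiso, X, hXV, hXcard, hX⟩ := hpre
  intro Y hYV hYm
  rcases Nat.lt_or_eq_of_le hYm with hlt | hYcard
  · exact hiso Y hYV (by omega)
  obtain _ | n := m
  · exact hiso Y hYV (by omega)
  by_cases hYX : Y ⊆ X
  · have hsum : ∀ Z ∈ X.powersetCard n, ∑ v ∈ X \ Z, weight (insert v Z) H = 0 := by
      intro Z hZ
      obtain ⟨hZX, hZ⟩ := mem_powersetCard.mp hZ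
      refine sum_sdiff_weight_insert_eq_zero hH hXV (hiso Z (hZX.trans hXV) hZ.le) ?_
      intro v hv hvX
      refine hX _ (insert_subset hv (hZX.trans hXV)) ?_ fun h => hvX (h (mem_insert_self v Z))
      rw [card_insert_of_notMem fun hvZ => hvX (hZX hvZ), hZ]
    have h := factorial_smul_eq_zero_of_sum_sdiff_insert_eq_zero (f := (weight · H))
      hYX hYcard (by omega) hsum
    exact (smul_eq_zero.mp h).resolve_left (Nat.factorial_ne_zero _)
  · exact hX Y hYV hYcard hYX

/-- **Lemma.** If a `k`-hypergraph `H` of dimension `d` is pre `m`-isolated,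
then `H` is `m`-isolated. -/
theorem preIsolated_isolated
    (k d m : ℕ) (hk : 1 ≤ k) (hd : 1 ≤ d)
    (H : HG d) (hH : IsHG k H) (hpre : PreIsolated m H) :
    IsIsolated m H :=
  preIsolated_isolated_general k d m H hH hpre
end

section
/- Let S be a family of k-hypergraphs of dimension d that is simple for {H}, where H is a k-hypergraph of dimension d, and let G ∈ Σ_ℤ(Eqs(S)). Then S is simple for {H + G}. -/
/-- `G` is an `(m, a)`-simple `k`-hypergraph:
its vertex set is (contained in) a disjoint union `A ∪ B ∪ C` with
`A = {α₁, …, α_m}`, `B = {β₁, …, β_m}` and `|C| = 2(k−m) − 1`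
(`C = ∅` when `m = k`), such that
`w_X(G) = (−1)^{|B ∩ X|} · a` for every `X = {x₁, …, x_m}` with
`x_i ∈ {α_i, β_i}` for each `i`, `w_X(G) = 0` for every other `m`-element set
`X` of vertices, and `w_X(G) = 0` for every set `X` of vertices with
`|X| < m`. -/
def IsSimple {d : ℕ} (k m : ℕ) (a : Fin d → ℤ) (G : HG d) : Prop :=
  ∃ (A B C : Finset ℕ) (α β : Fin m → ℕ),
    Function.Injective α ∧ Function.Injective β ∧
    A = Finset.image α Finset.univ ∧ B = Finset.image β Finset.univ ∧
    Disjoint A B ∧ Disjoint A C ∧ Disjoint B C ∧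
    C.card = 2 * (k - m) - 1 ∧
    verts G ⊆ A ∪ B ∪ C ∧
    (∀ χ : Fin m → Bool,
      weight (Finset.image (fun i => if χ i then β i else α i) Finset.univ) G
        = ((-1 : ℤ) ^ (Finset.univ.filter (fun i => χ i = true)).card) • a) ∧
    (∀ X : Finset ℕ, X ⊆ A ∪ B ∪ C → X.card = m →
        (∀ χ : Fin m → Bool,
          X ≠ Finset.image (fun i => if χ i then β i else α i) Finset.univ) →
        weight X G = 0) ∧
    (∀ X : Finset ℕ, X ⊆ A ∪ B ∪ C → X.card < m → weight X G = 0)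

/-- `S` is a simplification of the family `𝒢`: for every `0 ≤ m ≤ k` and every
vector `g` in the `ℤ`-span of the weights of `m`-element sets of vertices of
members of `𝒢`, the family `S` contains an `(m, g)`-simple `k`-hypergraph. -/
def IsSimplificationOf {d : ℕ} (k : ℕ) (S 𝒢 : Set (HG d)) : Prop :=
  ∀ m : ℕ, m ≤ k →
    ∀ g ∈ Submodule.span ℤ
      {w : Fin d → ℤ | ∃ G ∈ 𝒢, ∃ X : Finset ℕ,
        X ⊆ verts G ∧ X.card = m ∧ w = weight X G},
      ∃ G' ∈ S, IsSimple k m g G'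

/-- `S` is self-simplified: `S` is a simplification of `S` itself. -/
def SelfSimplified {d : ℕ} (k : ℕ) (S : Set (HG d)) : Prop :=
  IsSimplificationOf k S S

/-- `S` is simple for `𝒢`: `S` is self-simplified and a simplification of `𝒢`. -/
def SimpleFor {d : ℕ} (k : ℕ) (S 𝒢 : Set (HG d)) : Prop :=
  SelfSimplified k S ∧ IsSimplificationOf k S 𝒢

/-!
The weights of a `k`-hypergraph depend linearly on it and are permuted by relabelling its
vertices, so the `ℤ`-span of the `m`-weights of `H + G` lies in the span of the `m`-weights of
`H` together with those of members of `S`. Since `S` simplifies `{H}`, the `m`-weights of `H`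
also lie in the span of the `m`-weights of `S` (an `(m, g)`-simple hypergraph has `g` as the
weight of `{α₁, …, αₘ}`), and since `S` is self-simplified, every vector of that span is realised
by an `(m, g)`-simple member of `S`.
-/

open Finset

section

variable {d : ℕ}

noncomputable def weightLinear (X : Finset ℕ) : HG d →ₗ[ℤ] (Fin d → ℤ) :=
  Finsupp.lsum ℤ fun e => if X ⊆ e then LinearMap.id else 0

theorem weightLinear_apply (X : Finset ℕ) (H : HG d) : weightLinear X H = weight X H := by
  simp only [weightLinear, Finsupp.lsum_apply, Finsupp.sum, weight, sum_filter]
  exact sum_congr rfl fun e _ => by split_ifs <;> rfl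

theorem weight_add (X : Finset ℕ) (H G : HG d) :
    weight X (H + G) = weight X H + weight X G := by
  simp only [← weightLinear_apply, map_add]

theorem weight_sum_zsmul (X : Finset ℕ) {l : ℕ} (c : Fin l → ℤ) (F : Fin l → HG d) :
    weight X (∑ i, c i • F i) = ∑ i, c i • weight X (F i) := by
  simp only [← weightLinear_apply, map_sum, map_zsmul]

theorem subset_verts_of_weight_ne_zero {X : Finset ℕ} {H : HG d} (h : weight X H ≠ 0) :
    X ⊆ verts H := by
  obtain ⟨e, he⟩ := nonempty_of_sum_ne_zero h
  rw [mem_filter] at he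
  exact he.2.trans (le_sup (f := id) he.1)

theorem weight_image_of_forall_apply_image_eq (π : ℕ ≃ ℕ) {F₀ F : HG d}
    (h : ∀ e : Finset ℕ, F (e.image π) = F₀ e) (X : Finset ℕ) :
    weight (X.image π) F = weight X F₀ := by
  have image_symm_image : ∀ e : Finset ℕ, (e.image π.symm).image π = e := fun e => by
    simp [image_image]
  have image_image_symm : ∀ e : Finset ℕ, (e.image π).image π.symm = e := fun e => by
    simp [image_image]
  refine sum_nbij' (fun e => e.image π.symm) (fun e => e.image π) ?_ ?_
    (fun e _ => image_symm_image e) (fun e _ => image_image_symm e) ?_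
  · intro e he
    simp only [mem_filter, Finsupp.mem_support_iff] at he ⊢
    refine ⟨by rw [← h, image_symm_image]; exact he.1, ?_⟩
    simpa only [image_image_symm] using image_subset_image (f := π.symm) he.2
  · intro e he
    simp only [mem_filter, Finsupp.mem_support_iff] at he ⊢
    exact ⟨by rw [h]; exact he.1, image_subset_image he.2⟩
  · intro e _
    rw [← h, image_symm_image]

def weightSpan (𝒢 : Set (HG d)) (m : ℕ) : Submodule ℤ (Fin d → ℤ) :=
  Submodule.span ℤ
    {w : Fin d → ℤ | ∃ G ∈ 𝒢, ∃ X : Finset ℕ, X ⊆ verts G ∧ X.card = m ∧ w = weight X G}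

variable {𝒢 𝒢' : Set (HG d)} {m : ℕ}

theorem weight_mem_weightSpan {F : HG d} (hF : F ∈ 𝒢) {X : Finset ℕ} (hX : X.card = m) :
    weight X F ∈ weightSpan 𝒢 m := by
  by_cases h : weight X F = 0
  · rw [h]
    exact zero_mem _
  · exact Submodule.subset_span ⟨F, hF, X, subset_verts_of_weight_ne_zero h, hX, rfl⟩

theorem weightSpan_le {P : Submodule ℤ (Fin d → ℤ)}
    (h : ∀ F ∈ 𝒢, ∀ X : Finset ℕ, X.card = m → weight X F ∈ P) : weightSpan 𝒢 m ≤ P := by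
  rw [weightSpan, Submodule.span_le]
  rintro w ⟨F, hF, X, -, hX, rfl⟩
  exact h F hF X hX

theorem weightSpan_mono (h : 𝒢 ⊆ 𝒢') : weightSpan 𝒢 m ≤ weightSpan 𝒢' m :=
  Submodule.span_mono fun _ ⟨F, hF, hw⟩ => ⟨F, h hF, hw⟩

theorem weightSpan_singleton_add_le (H G : HG d) :
    weightSpan {H + G} m ≤ weightSpan {H} m ⊔ weightSpan {G} m := by
  refine weightSpan_le fun F hF X hX => ?_
  rw [Set.mem_singleton_iff.mp hF, weight_add]
  exact Submodule.add_mem_sup (weight_mem_weightSpan (Set.mem_singleton H) hX)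
    (weight_mem_weightSpan (Set.mem_singleton G) hX)

theorem weightSpan_Eqs_le : weightSpan (Eqs 𝒢) m ≤ weightSpan 𝒢 m := by
  refine weightSpan_le fun F ⟨F₀, hF₀, π, hπ⟩ X hX => ?_
  have hX' : (X.image π.symm).card = m := by
    rw [card_image_of_injective _ π.symm.injective, hX]
  have hXπ : (X.image π.symm).image π = X := by simp [image_image]
  rw [← hXπ, weight_image_of_forall_apply_image_eq π hπ]
  exact weight_mem_weightSpan hF₀ hX'

theorem weightSpan_Zsum_le : weightSpan (Zsum 𝒢) m ≤ weightSpan 𝒢 m := by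
  refine weightSpan_le ?_
  rintro - ⟨l, c, F, hF, rfl⟩ X hX
  rw [weight_sum_zsmul]
  exact sum_mem fun i _ => Submodule.smul_mem _ _ (weight_mem_weightSpan (hF i) hX)

theorem IsSimple.mem_weightSpan {S : Set (HG d)} {k : ℕ} {g : Fin d → ℤ} {G : HG d}
    (hG : IsSimple k m g G) (hGS : G ∈ S) : g ∈ weightSpan S m := by
  obtain ⟨_, _, _, α, _, hα, _, _, _, _, _, _, _, _, hχ, _⟩ := hG
  have hg : weight (univ.image α) G = g := by simpa using hχ fun _ => false
  rw [← hg]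
  exact weight_mem_weightSpan hGS
    (by rw [card_image_of_injective _ hα, card_univ, Fintype.card_fin])

theorem SelfSimplified.isSimplificationOf_iff {k : ℕ} {S : Set (HG d)}
    (hS : SelfSimplified k S) :
    IsSimplificationOf k S 𝒢 ↔ ∀ m ≤ k, weightSpan 𝒢 m ≤ weightSpan S m := by
  refine ⟨fun h m hm g hg => ?_, fun h m hm g hg => hS m hm g (h m hm hg)⟩
  obtain ⟨G, hGS, hG⟩ := h m hm g hg
  exact hG.mem_weightSpan hGS

end

theorem simpleFor_add_general
    (k d : ℕ)
    (S : Set (HG d))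
    (H : HG d) (hSH : SimpleFor k S {H})
    (G : HG d) (hG : G ∈ Zsum (Eqs S)) :
    SimpleFor k S {H + G} := by
  obtain ⟨hS, hSH⟩ := hSH
  refine ⟨hS, hS.isSimplificationOf_iff.mpr fun m hm => ?_⟩
  calc weightSpan {H + G} m ≤ weightSpan {H} m ⊔ weightSpan {G} m :=
        weightSpan_singleton_add_le H G
    _ ≤ weightSpan S m := sup_le (hS.isSimplificationOf_iff.mp hSH m hm)
        ((weightSpan_mono (Set.singleton_subset_iff.mpr hG)).trans
          (weightSpan_Zsum_le.trans weightSpan_Eqs_le))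

/-- **Lemma.** If the family `S` of `k`-hypergraphs is simple for `{H}` and
`G ∈ Σ_ℤ(Eqs(S))`, then `S` is simple for `{H + G}`. -/
theorem simpleFor_add
    (k d : ℕ) (hk : 1 ≤ k) (hd : 1 ≤ d)
    (S : Set (HG d)) (hSk : ∀ F ∈ S, IsHG k F)
    (H : HG d) (hH : IsHG k H) (hSH : SimpleFor k S {H})
    (G : HG d) (hG : G ∈ Zsum (Eqs S)) :
    SimpleFor k S {H + G} :=
  simpleFor_add_general k d S H hSH G hG
end
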